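/- arXiv:2409.06899 — 13 statements merged into one kernel-verified Lean document; each statement's English description precedes it below -/
import Mathlib

section
/- Let G = (φ1, φ2, X1, X2) be a coalitional Blotto game with inefficiency parameter β ∈ (0,1], and suppose φ2·X1 < φ1·X2. Then every mutually beneficial transfer τ satisfies τ < 0, i.e., resources are sent from Player 2 to Player 1. -/
noncomputable section

/-- Adversary's optimal allocation to game 1, assuming `φ2 * Y1 ≤ φ1 * Y2`.
Cases are checked in the order: Case 4, Case 1, Case 2, Case 3. -/
noncomputable def allocAux (φ1 φ2 Y1 Y2 : ℝ) : ℝ :=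
  if φ2 * Y1 = φ1 * Y2 ∧ 1 ≤ Y1 + Y2 then Y1 / (Y1 + Y2)
  else if φ2 ≤ φ1 * Y1 * Y2 then 1
  else if 1 - Real.sqrt (φ1 * Y1 * Y2 / φ2) ≤ Y2 then Real.sqrt (φ1 * Y1 * Y2 / φ2)
  else Real.sqrt (φ1 * Y1) / (Real.sqrt (φ1 * Y1) + Real.sqrt (φ2 * Y2))

/-- Adversary's optimal allocation to game 1; when `φ2 * Y1 > φ1 * Y2`, the
roles of the two players are swapped. -/
noncomputable def alloc1 (φ1 φ2 Y1 Y2 : ℝ) : ℝ :=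
  if φ2 * Y1 ≤ φ1 * Y2 then allocAux φ1 φ2 Y1 Y2
  else 1 - allocAux φ2 φ1 Y2 Y1

/-- Equilibrium payoff of a player with valuation `φ`, budget `Y`, facing
adversary allocation `XA`. -/
noncomputable def payoff (φ Y XA : ℝ) : ℝ :=
  if XA = 0 then φ
  else if Y ≤ XA then φ * Y / (2 * XA)
  else φ * (1 - XA / (2 * Y))

/-- Player 1's post-transfer budget. -/
noncomputable def Xbar1 (β X1 τ : ℝ) : ℝ := if 0 ≤ τ then X1 - τ else X1 - β * τ

/-- Player 2's post-transfer budget. -/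
noncomputable def Xbar2 (β X2 τ : ℝ) : ℝ := if 0 ≤ τ then X2 + β * τ else X2 + τ

/-- Player 1's equilibrium payoff `U_1(τ; G)` after transfer `τ`. -/
noncomputable def U1 (φ1 φ2 X1 X2 β τ : ℝ) : ℝ :=
  payoff φ1 (Xbar1 β X1 τ) (alloc1 φ1 φ2 (Xbar1 β X1 τ) (Xbar2 β X2 τ))

/-- Player 2's equilibrium payoff `U_2(τ; G)` after transfer `τ`. -/
noncomputable def U2 (φ1 φ2 X1 X2 β τ : ℝ) : ℝ :=
  payoff φ2 (Xbar2 β X2 τ) (1 - alloc1 φ1 φ2 (Xbar1 β X1 τ) (Xbar2 β X2 τ))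

/-- A transfer `τ ∈ (-X2, X1)` is mutually beneficial if it strictly improves
both players' equilibrium payoffs relative to no transfer. -/
def MutuallyBeneficial (φ1 φ2 X1 X2 β τ : ℝ) : Prop :=
  -X2 < τ ∧ τ < X1 ∧
  U1 φ1 φ2 X1 X2 β τ > U1 φ1 φ2 X1 X2 β 0 ∧
  U2 φ1 φ2 X1 X2 β τ > U2 φ1 φ2 X1 X2 β 0


/-! As long as `φ2 Y1 < φ1 Y2`, Player 1's equilibrium payoff is `min (max E₁ E₂) E₃`, where
`E₁ = payoff φ1 Y1 1` is the payoff against a full attack, `E₂ = √(φ1 φ2 Y1 Y2) / (2 Y2)` and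
`E₃ = (φ1 Y1 + √(φ1 φ2 Y1 Y2)) / 2`: the adversary's case split selects exactly this value.
A transfer `τ ≥ 0` replaces `(X1, X2)` by `(X1 - τ, X2 + β τ)` with `β τ ≤ τ`, which stays in
this regime and can only decrease each of `E₁`, `E₂`, `E₃`; so Player 1 never gains from it. -/

open Real

namespace CoalitionalBlotto

section Payoff

variable {p q a b u v x y : ℝ}

theorem payoff_one (p a : ℝ) :
    payoff p a 1 = if a ≤ 1 then p * a / 2 else p * (1 - 1 / (2 * a)) := by
  simp [payoff]

theorem payoff_one_monotone (hp : 0 ≤ p) : Monotone (payoff p · 1) := by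
  intro u x hux
  simp only [payoff_one]
  split_ifs with hu hx hx
  · gcongr
  · have : 1 / (2 * x) ≤ 1 / 2 := by gcongr; linarith
    nlinarith
  · linarith
  · have : 1 / (2 * x) ≤ 1 / (2 * u) := by gcongr; linarith
    nlinarith

theorem payoff_one_le (hp : 0 ≤ p) (ha : 0 < a) : payoff p a 1 ≤ p * a / 2 := by
  rw [payoff_one]
  split_ifs with h
  · rfl
  · have hsq : a / 2 - (1 - 1 / (2 * a)) = (a - 1) ^ 2 / (2 * a) := by field_simp; ring
    have : 0 ≤ (a - 1) ^ 2 / (2 * a) := by positivity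
    nlinarith

theorem le_payoff_one (hp : 0 ≤ p) : p * min a 1 / 2 ≤ payoff p a 1 := by
  rcases le_total a 1 with h | h
  · simp [payoff_one, h]
  · calc p * min a 1 / 2 = payoff p 1 1 := by simp [payoff_one, h]
      _ ≤ payoff p a 1 := payoff_one_monotone hp h

theorem alloc1_of_lt (hq : 0 < q) (hreg : q * a < p * b) :
    alloc1 p q a b =
      if q ≤ p * a * b then 1
      else if 1 - √(p * q * a * b) / q ≤ b then √(p * q * a * b) / q
      else √(p * a) / (√(p * a) + √(q * b)) := by
  have hsqrt : √(p * a * b / q) = √(p * q * a * b) / q := by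
    rw [show p * a * b / q = p * q * a * b / q ^ 2 by field_simp,
      sqrt_div' _ (sq_nonneg q), sqrt_sq hq.le]
  rw [alloc1, if_pos hreg.le, allocAux, if_neg (fun h => hreg.ne h.1), hsqrt]

theorem mul_le_sqrt (hq : 0 < q) (ha : 0 < a) (hreg : q * a ≤ p * b) :
    q * a ≤ √(p * q * a * b) := by
  have hqa : q * a * (q * a) ≤ q * a * (p * b) := mul_le_mul_of_nonneg_left hreg (by positivity)
  exact (le_sqrt (by positivity) (by nlinarith)).2 (by nlinarith)

theorem sqrt_le_mul (hp : 0 < p) (hb : 0 < b) (hreg : q * a ≤ p * b) :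
    √(p * q * a * b) ≤ p * b :=
  (sqrt_le_left (by positivity)).2
    (by nlinarith [mul_le_mul_of_nonneg_left hreg (by positivity : 0 ≤ p * b)])

theorem payoff_alloc1_of_le (hq : 0 < q) (hreg : q * a < p * b) (h : q ≤ p * a * b) :
    payoff p a (alloc1 p q a b) = payoff p a 1 := by
  rw [alloc1_of_lt hq hreg, if_pos h]

theorem payoff_alloc1_of_sqrt_ge (hp : 0 < p) (hq : 0 < q) (ha : 0 < a) (hb : 0 < b)
    (hreg : q * a < p * b) (h1 : p * a * b < q) (h2 : 1 - √(p * q * a * b) / q ≤ b) :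
    payoff p a (alloc1 p q a b) = √(p * q * a * b) / (2 * b) := by
  have haW : a ≤ √(p * q * a * b) / q := by
    rw [le_div_iff₀ hq, mul_comm]; exact mul_le_sqrt hq ha hreg.le
  rw [alloc1_of_lt hq hreg, if_neg h1.not_ge, if_pos h2, payoff, if_neg (by positivity),
    if_pos haW]
  have hW : √(p * q * a * b) * √(p * q * a * b) = p * q * a * b := mul_self_sqrt (by positivity)
  have hW0 : 0 < √(p * q * a * b) := sqrt_pos.2 (by positivity)
  set W := √(p * q * a * b)
  field_simp
  linear_combination -hW

theorem payoff_alloc1_of_sqrt_lt (hp : 0 < p) (hq : 0 < q) (ha : 0 < a) (hb : 0 < b)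
    (hreg : q * a < p * b) (h1 : p * a * b < q) (h2 : b < 1 - √(p * q * a * b) / q) :
    payoff p a (alloc1 p q a b) = (p * a + √(p * q * a * b)) / 2 := by
  have haW : a * q ≤ √(p * q * a * b) := by rw [mul_comm]; exact mul_le_sqrt hq ha hreg.le
  have hWb := sqrt_le_mul hp hb hreg.le
  have hgh : √(p * a) * √(q * b) = √(p * q * a * b) := by
    rw [← sqrt_mul (by positivity), show p * a * (q * b) = p * q * a * b by ring]
  have hg : √(p * a) * √(p * a) = p * a := mul_self_sqrt (by positivity)
  have hg0 : 0 < √(p * a) := sqrt_pos.2 (by positivity)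
  have hh0 : 0 < √(q * b) := sqrt_pos.2 (by positivity)
  rw [alloc1_of_lt hq hreg, if_neg h1.not_ge, if_neg h2.not_ge]
  set W := √(p * q * a * b)
  set g := √(p * a)
  set h := √(q * b)
  have hW1 : W < q * (1 - b) := by
    have := (div_lt_iff₀ hq).1 (by linarith : W / q < 1 - b); linarith
  have hWa : W ≤ p * (1 - a) := by nlinarith
  have halloc : a ≤ g / (g + h) := by
    rw [le_div_iff₀ (by positivity)]
    refine le_of_mul_le_mul_right ?_ hg0
    nlinarith [mul_le_mul_of_nonneg_left hWa ha.le]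
  rw [payoff, if_neg (by positivity), if_pos halloc, ← hgh]
  field_simp
  linear_combination (-h) * hg

theorem payoff_alloc1_eq_min_max (hp : 0 < p) (hq : 0 < q) (ha : 0 < a) (hb : 0 < b)
    (hreg : q * a < p * b) :
    payoff p a (alloc1 p q a b) =
      min (max (payoff p a 1) (√(p * q * a * b) / (2 * b))) ((p * a + √(p * q * a * b)) / 2) := by
  have hW : √(p * q * a * b) * √(p * q * a * b) = p * q * a * b := mul_self_sqrt (by positivity)
  have hW0 : 0 < √(p * q * a * b) := sqrt_pos.2 (by positivity)
  have hE1 : payoff p a 1 ≤ p * a / 2 := payoff_one_le hp.le ha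
  set W := √(p * q * a * b)
  rcases le_or_gt q (p * a * b) with h1 | h1
  · have hWpab : W ≤ p * a * b := by
      nlinarith [mul_le_mul_of_nonneg_left h1 (by positivity : 0 ≤ p * a * b)]
    have hWmin : W ≤ p * min a 1 * b := by
      rcases min_cases a 1 with ⟨h, -⟩ | ⟨h, -⟩ <;> rw [h]
      · exact hWpab
      · simpa using sqrt_le_mul hp hb hreg.le
    have hE2 : W / (2 * b) ≤ payoff p a 1 := by
      refine le_trans ?_ (le_payoff_one hp.le)
      rw [div_le_div_iff₀ (by positivity) two_pos]; nlinarith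
    rw [payoff_alloc1_of_le hq hreg h1, max_eq_left hE2, min_eq_left (by linarith)]
  rcases le_or_gt (1 - W / q) b with h2 | h2
  · have hqW : q * (1 - b) ≤ W := by rw [← le_div_iff₀' hq]; linarith
    have hE2 : payoff p a 1 ≤ W / (2 * b) := by
      refine hE1.trans ?_
      rw [div_le_div_iff₀ two_pos (by positivity)]
      nlinarith [mul_le_mul_of_nonneg_left h1.le (by positivity : 0 ≤ p * a * b)]
    have hE3 : W / (2 * b) ≤ (p * a + W) / 2 := by
      rw [div_le_div_iff₀ (by positivity) two_pos]
      nlinarith [mul_le_mul_of_nonneg_left hqW hW0.le]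
    rw [payoff_alloc1_of_sqrt_ge hp hq ha hb hreg h1 h2, max_eq_right hE2, min_eq_left hE3]
  · have hqW : W < q * (1 - b) := by rw [← div_lt_iff₀' hq]; linarith
    have hE3 : (p * a + W) / 2 ≤ W / (2 * b) := by
      rw [div_le_div_iff₀ two_pos (by positivity)]
      nlinarith [mul_lt_mul_of_pos_left hqW hW0]
    rw [payoff_alloc1_of_sqrt_lt hp hq ha hb hreg h1 h2,
      min_eq_right (hE3.trans (le_max_right _ _))]

theorem sqrt_div_two_mul_eq (hb : 0 < b) :
    √(p * q * a * b) / (2 * b) = √(p * q * a / b) / 2 := by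
  rw [show p * q * a * b = p * q * a / b * b ^ 2 by field_simp, sqrt_mul' _ (sq_nonneg b),
    sqrt_sq hb.le]
  field_simp

theorem sqrt_div_two_mul_le (hp : 0 < p) (hq : 0 < q) (hx : 0 ≤ x) (hy : 0 < y) (hux : u ≤ x)
    (hyv : y ≤ v) :
    √(p * q * u * v) / (2 * v) ≤ √(p * q * x * y) / (2 * y) := by
  rw [sqrt_div_two_mul_eq (hy.trans_le hyv), sqrt_div_two_mul_eq hy]
  gcongr

theorem add_sqrt_le_add_sqrt (hp : 0 < p) (hq : 0 < q) (hu : 0 < u) (hy : 0 < y)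
    (hux : u ≤ x) (hyv : y ≤ v) (hvx : v - y ≤ x - u) (hreg : q * u ≤ p * v) :
    p * u + √(p * q * u * v) ≤ p * x + √(p * q * x * y) := by
  have hv : 0 < v := hy.trans_le hyv
  have hx : 0 < x := hu.trans_le hux
  have hs2 : √(p * q * u * v) ^ 2 = p * q * u * v := sq_sqrt (by positivity)
  have ht2 : √(p * q * x * y) ^ 2 = p * q * x * y := sq_sqrt (by positivity)
  have hqs : q * u ≤ √(p * q * u * v) := mul_le_sqrt hq hu hreg
  have ht0 : 0 ≤ √(p * q * x * y) := sqrt_nonneg _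
  set s := √(p * q * u * v)
  set t := √(p * q * x * y)
  suffices s - t ≤ p * (x - u) by linarith
  rcases le_or_gt s t with hst | hst
  · nlinarith [mul_nonneg hp.le (sub_nonneg.2 hux)]
  have hdiff : s ^ 2 - t ^ 2 ≤ p * q * u * (x - u) := by
    rw [hs2, ht2]
    nlinarith [mul_le_mul_of_nonneg_left hvx (by positivity : 0 ≤ p * q * u),
      mul_le_mul_of_nonneg_left hux (by positivity : 0 ≤ p * q * y)]
  refine le_of_mul_le_mul_right ?_ (hqs.trans_lt' (by positivity) : 0 < s)
  calc (s - t) * s ≤ s ^ 2 - t ^ 2 := by nlinarith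
    _ ≤ p * (x - u) * (q * u) := by linarith
    _ ≤ p * (x - u) * s := by gcongr

theorem payoff_alloc1_le_of_transfer (hp : 0 < p) (hq : 0 < q) (hu : 0 < u) (hy : 0 < y)
    (hux : u ≤ x) (hyv : y ≤ v) (hvx : v - y ≤ x - u) (hreg : q * x < p * y) :
    payoff p u (alloc1 p q u v) ≤ payoff p x (alloc1 p q x y) := by
  have hv : 0 < v := hy.trans_le hyv
  have hx : 0 < x := hu.trans_le hux
  have hreg' : q * u < p * v := by
    calc q * u ≤ q * x := by gcongr
      _ < p * y := hreg
      _ ≤ p * v := by gcongr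
  rw [payoff_alloc1_eq_min_max hp hq hu hv hreg', payoff_alloc1_eq_min_max hp hq hx hy hreg]
  exact min_le_min
    (max_le_max (payoff_one_monotone hp.le hux) (sqrt_div_two_mul_le hp hq hx.le hy hux hyv))
    (by linarith [add_sqrt_le_add_sqrt hp hq hu hy hux hyv hvx hreg'.le])

end Payoff

theorem U1_le_U1_zero {φ1 φ2 X1 X2 β τ : ℝ} (hφ1 : 0 < φ1) (hφ2 : 0 < φ2) (hX2 : 0 < X2)
    (hβ0 : 0 ≤ β) (hβ1 : β ≤ 1) (hord : φ2 * X1 < φ1 * X2) (hτ0 : 0 ≤ τ) (hτX : τ < X1) :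
    U1 φ1 φ2 X1 X2 β τ ≤ U1 φ1 φ2 X1 X2 β 0 := by
  have hβτ : β * τ ≤ τ := by nlinarith
  simp only [U1, Xbar1, Xbar2, if_pos hτ0, le_refl, if_true, sub_zero, mul_zero, add_zero]
  exact payoff_alloc1_le_of_transfer hφ1 hφ2 (by linarith) hX2 (by linarith)
    (by nlinarith) (by linarith) hord

end CoalitionalBlotto

theorem mutually_beneficial_transfer_neg_general (φ1 φ2 X1 X2 β : ℝ)
    (hφ1 : 0 < φ1) (hφ2 : 0 < φ2) (hX2 : 0 < X2)
    (hβ0 : 0 < β) (hβ1 : β ≤ 1) (hord : φ2 * X1 < φ1 * X2) :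
    ∀ τ : ℝ, MutuallyBeneficial φ1 φ2 X1 X2 β τ → τ < 0 := by
  rintro τ ⟨-, hτX, hU1, -⟩
  by_contra! hτ0
  exact (CoalitionalBlotto.U1_le_U1_zero hφ1 hφ2 hX2 hβ0.le hβ1 hord hτ0 hτX).not_gt hU1

/-- **Theorem 1 (direction part).** In a coalitional Blotto game with
`φ2·X1 < φ1·X2`, every mutually beneficial transfer is negative, i.e.,
resources are sent from Player 2 to Player 1. -/
theorem mutually_beneficial_transfer_neg (φ1 φ2 X1 X2 β : ℝ)
    (hφ1 : 0 < φ1) (hφ2 : 0 < φ2) (hX1 : 0 < X1) (hX2 : 0 < X2)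
    (hβ0 : 0 < β) (hβ1 : β ≤ 1) (hord : φ2 * X1 < φ1 * X2) :
    ∀ τ : ℝ, MutuallyBeneficial φ1 φ2 X1 X2 β τ → τ < 0 :=
  mutually_beneficial_transfer_neg_general φ1 φ2 X1 X2 β hφ1 hφ2 hX2 hβ0 hβ1 hord
end
end

section
/- Let φ1, φ2, X1, X2 be positive reals and β ∈ (0,1]. If φ2·X1 < φ1·X2, φ2 > φ1·X1·X2, and β > min( √(4·φ2·X1/(φ1·X2^3)) − X1/X2 , √(4·φ2·X1/(φ1·X2)) + X1/X2 ), then G = (φ1, φ2, X1, X2) does not belong to G†(β). (Thus every game admitting a mutually beneficial transfer admits a nonzero alliance optimal transfer.) -/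
noncomputable section

/-- Case 4 of the adversary's allocation: `φ2·X1 = φ1·X2` and `X1 + X2 ≥ 1`. -/
def InCase4 (φ1 φ2 X1 X2 : ℝ) : Prop := φ2 * X1 = φ1 * X2 ∧ 1 ≤ X1 + X2

/-- Case 1: not Case 4, and `φ2 ≤ φ1·X1·X2`. -/
def InCase1 (φ1 φ2 X1 X2 : ℝ) : Prop :=
  ¬ InCase4 φ1 φ2 X1 X2 ∧ φ2 ≤ φ1 * X1 * X2

/-- Case 2: not Case 4 nor Case 1, and `1 - √(φ1·X1·X2/φ2) ≤ X2`. -/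
def InCase2 (φ1 φ2 X1 X2 : ℝ) : Prop :=
  ¬ InCase4 φ1 φ2 X1 X2 ∧ ¬ (φ2 ≤ φ1 * X1 * X2) ∧
    1 - Real.sqrt (φ1 * X1 * X2 / φ2) ≤ X2

/-- Case 3: not Case 4, 1, nor 2. -/
def InCase3 (φ1 φ2 X1 X2 : ℝ) : Prop :=
  ¬ InCase4 φ1 φ2 X1 X2 ∧ ¬ (φ2 ≤ φ1 * X1 * X2) ∧
    ¬ (1 - Real.sqrt (φ1 * X1 * X2 / φ2) ≤ X2)

/-- Membership in the set `G†(β)` of games whose alliance optimal transfer is zero. -/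
def GDagger (φ1 φ2 X1 X2 β : ℝ) : Prop :=
  (InCase2 φ1 φ2 X1 X2 ∧ X1 + β * X2 ≤ Real.sqrt (φ2 * X1 / (φ1 * X2))) ∨
  InCase4 φ1 φ2 X1 X2 ∨
  (InCase3 φ1 φ2 X1 X2 ∧
    β * φ1 - φ2 ≤ Real.sqrt (φ1 * φ2 / (X1 * X2)) * (X1 - β * X2))

/-!
Write `R = √(φ2·X1/(φ1·X2))` and `s = √(φ1·X1·X2/φ2)`, so that `R·s = X1`. The two terms of the
minimum are `(2R - X1)/X2` and `2R + X1/X2`, so the bound on `β` gives `2R < X1 + β·X2` or `R < β`.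
Case 4 needs `φ2·X1 = φ1·X2`, which is excluded. In Case 3 the defining inequality of `G†(β)`
factors as `(β - R)(φ1 + φ2/R) ≤ 0`, i.e. `β ≤ R`, while `X2 < 1 - s` turns `2R < X1 + β·X2`
into `R < β`. In Case 2, `X2 ≥ 1 - s` gives `X1 + R·X2 ≥ R`, so either alternative yields
`R < X1 + β·X2`, against the defining inequality `X1 + β·X2 ≤ R`.
-/

open Real

theorem two_mul_lt_or_lt_of_min_lt {R X1 X2 β : ℝ} (hX1 : 0 ≤ X1) (hX2 : 0 < X2) (hR : 0 ≤ R)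
    (h : min (2 * R / X2 - X1 / X2) (2 * R + X1 / X2) < β) :
    2 * R < X1 + β * X2 ∨ R < β := by
  rcases min_lt_iff.1 h with h | h
  · rw [div_sub_div_same, div_lt_iff₀ hX2] at h
    left; linarith
  · have : 0 ≤ X1 / X2 := by positivity
    right; linarith

theorem lt_add_mul_of_one_sub_le {R s X1 X2 β : ℝ} (hR : 0 < R) (hX2 : 0 < X2)
    (hRs : R * s = X1) (hs : 1 - s ≤ X2) (h : 2 * R < X1 + β * X2 ∨ R < β) :
    R < X1 + β * X2 := by
  rcases h with h | h
  · linarith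
  · nlinarith [mul_pos (sub_pos.2 h) hX2, mul_nonneg hR.le (sub_nonneg.2 hs)]

theorem lt_of_lt_one_sub {R s X1 X2 β : ℝ} (hR : 0 < R) (hX2 : 0 < X2)
    (hRs : R * s = X1) (hs : X2 < 1 - s) (h : 2 * R < X1 + β * X2 ∨ R < β) :
    R < β := by
  rcases h with h | h
  · have : R * X2 < β * X2 := by nlinarith [mul_lt_mul_of_pos_left hs hR]
    exact lt_of_mul_lt_mul_right this hX2.le
  · exact h

theorem sqrt_four_mul_div (φ1 φ2 X1 X2 : ℝ) :
    √(4 * φ2 * X1 / (φ1 * X2)) = 2 * √(φ2 * X1 / (φ1 * X2)) := by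
  rw [show 4 * φ2 * X1 / (φ1 * X2) = 2 ^ 2 * (φ2 * X1 / (φ1 * X2)) by ring,
    sqrt_mul (by positivity), sqrt_sq (by positivity)]

theorem sqrt_four_mul_div_cube (φ1 φ2 X1 : ℝ) {X2 : ℝ} (hX2 : 0 ≤ X2) :
    √(4 * φ2 * X1 / (φ1 * X2 ^ 3)) = 2 * √(φ2 * X1 / (φ1 * X2)) / X2 := by
  rw [show 4 * φ2 * X1 / (φ1 * X2 ^ 3) = (2 / X2) ^ 2 * (φ2 * X1 / (φ1 * X2)) by ring,
    sqrt_mul (by positivity), sqrt_sq (by positivity)]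
  ring

section Positive

variable {φ1 φ2 X1 X2 : ℝ} (hφ1 : 0 < φ1) (hφ2 : 0 < φ2) (hX1 : 0 < X1) (hX2 : 0 < X2)
include hφ1 hφ2 hX1 hX2

theorem sqrt_div_mul_sqrt_div :
    √(φ2 * X1 / (φ1 * X2)) * √(φ1 * X1 * X2 / φ2) = X1 := by
  rw [← sqrt_mul (by positivity),
    show φ2 * X1 / (φ1 * X2) * (φ1 * X1 * X2 / φ2) = X1 ^ 2 by field_simp]
  exact sqrt_sq hX1.le

theorem sub_le_sqrt_mul_iff (β : ℝ) :
    β * φ1 - φ2 ≤ √(φ1 * φ2 / (X1 * X2)) * (X1 - β * X2) ↔ β ≤ √(φ2 * X1 / (φ1 * X2)) := by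
  set R := √(φ2 * X1 / (φ1 * X2))
  have hR : 0 < R := sqrt_pos.2 (by positivity)
  have hC : √(φ1 * φ2 / (X1 * X2)) = φ1 * R / X1 := by
    rw [show φ1 * φ2 / (X1 * X2) = (φ1 / X1) ^ 2 * (φ2 * X1 / (φ1 * X2)) by field_simp,
      sqrt_mul (by positivity), sqrt_sq (by positivity)]
    ring
  have hφ2R : φ2 = φ1 * R ^ 2 * X2 / X1 := by
    rw [sq_sqrt (by positivity)]; field_simp
  have hfactor : √(φ1 * φ2 / (X1 * X2)) * (X1 - β * X2) - (β * φ1 - φ2) =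
      (R - β) * (φ1 * (X1 + R * X2) / X1) := by
    rw [hC, hφ2R]; field_simp; ring
  have hpos : 0 < φ1 * (X1 + R * X2) / X1 := by positivity
  rw [← sub_nonneg, hfactor, mul_nonneg_iff_of_pos_right hpos, sub_nonneg]

end Positive

theorem mutually_beneficial_not_in_GDagger_general (φ1 φ2 X1 X2 β : ℝ)
    (hφ1 : 0 < φ1) (hφ2 : 0 < φ2) (hX1 : 0 < X1) (hX2 : 0 < X2)
    (hord : φ2 * X1 < φ1 * X2)
    (hc2 : β > min (Real.sqrt (4 * φ2 * X1 / (φ1 * X2 ^ 3)) - X1 / X2)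
                   (Real.sqrt (4 * φ2 * X1 / (φ1 * X2)) + X1 / X2)) :
    ¬ GDagger φ1 φ2 X1 X2 β := by
  have hRs := sqrt_div_mul_sqrt_div hφ1 hφ2 hX1 hX2
  have hR : 0 < √(φ2 * X1 / (φ1 * X2)) := sqrt_pos.2 (by positivity)
  rw [sqrt_four_mul_div_cube _ _ _ hX2.le, sqrt_four_mul_div] at hc2
  have hβ := two_mul_lt_or_lt_of_min_lt hX1.le hX2 hR.le hc2
  rintro (⟨⟨-, -, h2⟩, hle⟩ | ⟨heq, -⟩ | ⟨⟨-, -, h3⟩, hle⟩)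
  · exact hle.not_gt (lt_add_mul_of_one_sub_le hR hX2 hRs h2 hβ)
  · exact hord.ne heq
  · rw [sub_le_sqrt_mul_iff hφ1 hφ2 hX1 hX2] at hle
    exact hle.not_gt (lt_of_lt_one_sub hR hX2 hRs (not_le.1 h3) hβ)

/-- Every game admitting a mutually beneficial transfer (per the conditions of
Theorem 1) lies outside `G†(β)`, hence admits a nonzero alliance optimal transfer. -/
theorem mutually_beneficial_not_in_GDagger (φ1 φ2 X1 X2 β : ℝ)
    (hφ1 : 0 < φ1) (hφ2 : 0 < φ2) (hX1 : 0 < X1) (hX2 : 0 < X2)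
    (hβ0 : 0 < β) (hβ1 : β ≤ 1) (hord : φ2 * X1 < φ1 * X2)
    (hc1 : φ2 > φ1 * X1 * X2)
    (hc2 : β > min (Real.sqrt (4 * φ2 * X1 / (φ1 * X2 ^ 3)) - X1 / X2)
                   (Real.sqrt (4 * φ2 * X1 / (φ1 * X2)) + X1 / X2)) :
    ¬ GDagger φ1 φ2 X1 X2 β :=
  mutually_beneficial_not_in_GDagger_general φ1 φ2 X1 X2 β hφ1 hφ2 hX1 hX2 hord hc2
end
end

section
/- Let G = (φ1, φ2, X1, X2) be a coalitional Blotto game with inefficiency parameter β ∈ (0,1], and suppose φ2·X1 < φ1·X2 and φ2 ≤ φ1·X1·X2 (i.e., G is in Case 1, so the adversary allocates their entire budget against Player 1 and Player 2's payoff at τ = 0 equals φ2). Then G admits no mutually beneficial transfer. -/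
noncomputable section

lemma allocAux_nonneg (φ1 φ2 Y1 Y2 : ℝ) (hφ1 : 0 < φ1) (hφ2 : 0 < φ2)
    (hY1 : 0 < Y1) (hY2 : 0 < Y2) : 0 ≤ allocAux φ1 φ2 Y1 Y2 := by
  unfold allocAux
  split_ifs <;> positivity

lemma allocAux_le_one (φ1 φ2 Y1 Y2 : ℝ) (hφ1 : 0 < φ1) (hφ2 : 0 < φ2)
    (hY1 : 0 < Y1) (hY2 : 0 < Y2) : allocAux φ1 φ2 Y1 Y2 ≤ 1 := by
  unfold allocAux
  split_ifs with h1 h2 h3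
  · rw [div_le_one (by linarith)]; linarith
  · exact le_refl 1
  · rw [Real.sqrt_le_one]
    rw [div_le_one hφ2]; push_neg at h2; nlinarith
  · rw [div_le_one (by positivity)]
    nlinarith [Real.sqrt_nonneg (φ2 * Y2)]

lemma alloc1_le_one (φ1 φ2 Y1 Y2 : ℝ) (hφ1 : 0 < φ1) (hφ2 : 0 < φ2)
    (hY1 : 0 < Y1) (hY2 : 0 < Y2) : alloc1 φ1 φ2 Y1 Y2 ≤ 1 := by
  unfold alloc1
  split_ifs with h
  · exact allocAux_le_one φ1 φ2 Y1 Y2 hφ1 hφ2 hY1 hY2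
  · linarith [allocAux_nonneg φ2 φ1 Y2 Y1 hφ2 hφ1 hY2 hY1]

lemma payoff_le (φ Y XA : ℝ) (hφ : 0 < φ) (hY : 0 < Y) (hXA : 0 ≤ XA) :
    payoff φ Y XA ≤ φ := by
  unfold payoff
  split_ifs with h1 h2
  · exact le_refl φ
  · have hXA' : 0 < XA := lt_of_le_of_ne hXA (Ne.symm h1)
    rw [div_le_iff₀ (by linarith)]; nlinarith
  · nlinarith [div_nonneg hXA (by linarith : (0:ℝ) ≤ 2 * Y)]

/-- **Case 1.** If `φ2·X1 < φ1·X2` and `φ2 ≤ φ1·X1·X2`, the adversary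
allocates everything against Player 1, Player 2 already wins all their
contests, and no mutually beneficial transfer exists. -/
theorem case1_no_mutually_beneficial (φ1 φ2 X1 X2 β : ℝ)
    (hφ1 : 0 < φ1) (hφ2 : 0 < φ2) (hX1 : 0 < X1) (hX2 : 0 < X2)
    (hβ0 : 0 < β) (hβ1 : β ≤ 1) (hord : φ2 * X1 < φ1 * X2)
    (hcase1 : φ2 ≤ φ1 * X1 * X2) :
    ¬ ∃ τ : ℝ, MutuallyBeneficial φ1 φ2 X1 X2 β τ := by
  rintro ⟨τ, hτ1, hτ2, _, hU2⟩
  have hY2 : 0 < Xbar2 β X2 τ := by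
    unfold Xbar2; split_ifs with h
    · nlinarith
    · linarith
  have hY1 : 0 < Xbar1 β X1 τ := by
    unfold Xbar1; split_ifs with h
    · linarith
    · push_neg at h; nlinarith
  have halloc : alloc1 φ1 φ2 (Xbar1 β X1 τ) (Xbar2 β X2 τ) ≤ 1 :=
    alloc1_le_one _ _ _ _ hφ1 hφ2 hY1 hY2
  have hle : U2 φ1 φ2 X1 X2 β τ ≤ φ2 :=
    payoff_le _ _ _ hφ2 hY2 (by linarith)
  have h0 : U2 φ1 φ2 X1 X2 β 0 = φ2 := by
    unfold U2 Xbar1 Xbar2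
    norm_num
    have hA : alloc1 φ1 φ2 X1 X2 = 1 := by
      unfold alloc1 allocAux
      rw [if_pos hord.le, if_neg, if_pos hcase1]
      rintro ⟨h, _⟩; exact hord.ne h
    rw [hA]; simp [payoff]
  rw [h0] at hU2
  linarith
end
end

section
/- Let φ1, φ2, X1, X2 be positive reals and β ∈ (0,1]. Define U2(τ) = φ2·(1 − 1/(2·(X2 + τ))) + (1/2)·√( φ1·φ2·(X1 − β·τ)/(X2 + τ) ) on (−X2, X1/β). Then the derivative of U2 at τ = 0 is strictly negative if and only if β > √(4·φ2·X1/(φ1·X2^3)) − X1/X2. -/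
noncomputable section

/-!
At `τ = 0` the derivative is `φ2 / (2 X2²) − φ1 φ2 (X1 + β X2) / (4 X2² s)` with
`s = √(φ1 φ2 X1 / X2)`. Since `φ1 X2 √(4 φ2 X1 / (φ1 X2³)) = 2 s`, this is the positive
multiple `φ1 φ2 / (4 X2 s)` of `√(4 φ2 X1 / (φ1 X2³)) − X1 / X2 − β`, whose sign gives
the claim.
-/

open Real

def case2Payoff2 (φ1 φ2 X1 X2 β τ : ℝ) : ℝ :=
  φ2 * (1 - 1 / (2 * (X2 + τ))) + (1 / 2) * √(φ1 * φ2 * (X1 - β * τ) / (X2 + τ))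

theorem hasDerivAt_case2Payoff2_zero {φ1 φ2 X1 X2 : ℝ} (β : ℝ) (hX2 : X2 ≠ 0)
    (hq : φ1 * φ2 * X1 ≠ 0) :
    HasDerivAt (case2Payoff2 φ1 φ2 X1 X2 β)
      (φ2 / (2 * X2 ^ 2) - φ1 * φ2 * (X1 + β * X2) / (4 * X2 ^ 2 * √(φ1 * φ2 * X1 / X2)))
      0 := by
  have hden : HasDerivAt (fun τ : ℝ => X2 + τ) 1 0 := (hasDerivAt_id (0 : ℝ)).const_add X2
  have hden0 : X2 + 0 ≠ 0 := by simpa using hX2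
  have hnum : HasDerivAt (fun τ : ℝ => φ1 * φ2 * (X1 - β * τ)) (φ1 * φ2 * -(β * 1)) 0 :=
    (((hasDerivAt_id (0 : ℝ)).const_mul β).const_sub X1).const_mul (φ1 * φ2)
  have hrecip := (hasDerivAt_const (0 : ℝ) (1 : ℝ)).div (hden.const_mul 2) (by simpa using hX2)
  have hratio := hnum.div hden hden0
  have hfirst := (hrecip.const_sub 1).const_mul φ2
  have hsecond := (hratio.sqrt (by simpa using div_ne_zero hq hX2)).const_mul (1 / 2)
  refine (hfirst.add hsecond).congr_deriv ?_
  simp only [Pi.div_apply, mul_zero, sub_zero, add_zero, mul_one]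
  field_simp
  ring

theorem mul_sqrt_four_mul_div_eq {φ1 X2 : ℝ} (φ2 X1 : ℝ) (hφ1 : 0 < φ1) (hX2 : 0 < X2) :
    φ1 * X2 * √(4 * φ2 * X1 / (φ1 * X2 ^ 3)) = 2 * √(φ1 * φ2 * X1 / X2) := by
  rw [← sqrt_sq (by positivity : 0 ≤ φ1 * X2), ← sqrt_mul (by positivity),
    ← sqrt_sq (zero_le_two : (0 : ℝ) ≤ 2), ← sqrt_mul (by positivity)]
  congr 1
  field_simp
  ring

theorem case2_payoff2_deriv_neg_iff_general (φ1 φ2 X1 X2 β : ℝ)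
    (hφ1 : 0 < φ1) (hφ2 : 0 < φ2) (hX1 : 0 < X1) (hX2 : 0 < X2) :
    deriv (fun τ : ℝ => φ2 * (1 - 1 / (2 * (X2 + τ))) +
        (1 / 2) * Real.sqrt (φ1 * φ2 * (X1 - β * τ) / (X2 + τ))) 0 < 0 ↔
      β > Real.sqrt (4 * φ2 * X1 / (φ1 * X2 ^ 3)) - X1 / X2 := by
  change deriv (case2Payoff2 φ1 φ2 X1 X2 β) 0 < 0 ↔ _
  set s := √(φ1 * φ2 * X1 / X2)
  set t := √(4 * φ2 * X1 / (φ1 * X2 ^ 3))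
  have hs : 0 < s := sqrt_pos.mpr (by positivity)
  have hts : φ1 * X2 * t = 2 * s := mul_sqrt_four_mul_div_eq φ2 X1 hφ1 hX2
  have hfactor : φ2 / (2 * X2 ^ 2) - φ1 * φ2 * (X1 + β * X2) / (4 * X2 ^ 2 * s) =
      φ1 * φ2 / (4 * X2 * s) * (t - X1 / X2 - β) := by
    field_simp
    linear_combination (-2) * hts
  have hC : 0 < φ1 * φ2 / (4 * X2 * s) := by positivity
  rw [(hasDerivAt_case2Payoff2_zero β hX2.ne' (by positivity)).deriv, hfactor, gt_iff_lt,
    ← sub_neg (a := t - X1 / X2)]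
  exact ⟨fun h => neg_of_mul_neg_right h hC.le, mul_neg_of_pos_of_neg hC⟩

/-- In Case 2, Player 2's payoff has strictly negative derivative at `τ = 0`
iff `β > √(4φ2X1/(φ1X2³)) − X1/X2`. -/
theorem case2_payoff2_deriv_neg_iff (φ1 φ2 X1 X2 β : ℝ)
    (hφ1 : 0 < φ1) (hφ2 : 0 < φ2) (hX1 : 0 < X1) (hX2 : 0 < X2)
    (hβ0 : 0 < β) (hβ1 : β ≤ 1) :
    deriv (fun τ : ℝ => φ2 * (1 - 1 / (2 * (X2 + τ))) +
        (1 / 2) * Real.sqrt (φ1 * φ2 * (X1 - β * τ) / (X2 + τ))) 0 < 0 ↔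
      β > Real.sqrt (4 * φ2 * X1 / (φ1 * X2 ^ 3)) - X1 / X2 :=
  case2_payoff2_deriv_neg_iff_general φ1 φ2 X1 X2 β hφ1 hφ2 hX1 hX2
end
end

section
/- Let φ1, φ2, X1, X2 be positive reals and β ∈ (0,1] with β > √(4·φ2·X1/(φ1·X2^3)) − X1/X2. Define U1(τ) = (1/2)·√( φ1·φ2·(X1 − β·τ)/(X2 + τ) ) and U2(τ) = φ2·(1 − 1/(2·(X2 + τ))) + U1(τ). Then there exists τ ∈ (−X2, 0) with U1(τ) > U1(0) and U2(τ) > U2(0). -/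
noncomputable section

set_option maxHeartbeats 1000000 in
/-- In Case 2, if `β > √(4φ2X1/(φ1X2³)) − X1/X2`, then some negative transfer
strictly improves both players' payoffs. -/
theorem case2_mutually_beneficial_exists (φ1 φ2 X1 X2 β : ℝ)
    (hφ1 : 0 < φ1) (hφ2 : 0 < φ2) (hX1 : 0 < X1) (hX2 : 0 < X2)
    (hβ0 : 0 < β) (hβ1 : β ≤ 1)
    (hβ : β > Real.sqrt (4 * φ2 * X1 / (φ1 * X2 ^ 3)) - X1 / X2) :
    ∃ τ ∈ Set.Ioo (-X2) (0 : ℝ),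
      (fun τ : ℝ => (1 / 2) * Real.sqrt (φ1 * φ2 * (X1 - β * τ) / (X2 + τ))) τ >
        (fun τ : ℝ => (1 / 2) * Real.sqrt (φ1 * φ2 * (X1 - β * τ) / (X2 + τ))) 0 ∧
      (fun τ : ℝ => φ2 * (1 - 1 / (2 * (X2 + τ))) +
          (1 / 2) * Real.sqrt (φ1 * φ2 * (X1 - β * τ) / (X2 + τ))) τ >
        (fun τ : ℝ => φ2 * (1 - 1 / (2 * (X2 + τ))) +
          (1 / 2) * Real.sqrt (φ1 * φ2 * (X1 - β * τ) / (X2 + τ))) 0 := by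
  have hwnn : 0 ≤ Real.sqrt (φ1 * φ2 * X1 / X2) := Real.sqrt_nonneg _
  set w := Real.sqrt (φ1 * φ2 * X1 / X2) with hw
  have hw2 : w ^ 2 = φ1 * φ2 * X1 / X2 := Real.sq_sqrt (by positivity)
  have hw2' : w ^ 2 * X2 = φ1 * φ2 * X1 := by
    rw [hw2]; field_simp
  -- square the hypothesis
  have hsq : Real.sqrt (4 * φ2 * X1 / (φ1 * X2 ^ 3)) ^ 2
      = 4 * φ2 * X1 / (φ1 * X2 ^ 3) := Real.sq_sqrt (by positivity)
  have hsn : 0 ≤ Real.sqrt (4 * φ2 * X1 / (φ1 * X2 ^ 3)) := Real.sqrt_nonneg _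
  have hX1X2 : 0 < X1 / X2 := by positivity
  have hβ' : β + X1 / X2 > Real.sqrt (4 * φ2 * X1 / (φ1 * X2 ^ 3)) := by linarith
  have hE' : (β + X1 / X2) ^ 2 > 4 * φ2 * X1 / (φ1 * X2 ^ 3) := by nlinarith
  have hpoly : φ1 * (β * X2 + X1) ^ 2 * X2 > 4 * φ2 * X1 := by
    have h2 : β + X1 / X2 = (β * X2 + X1) / X2 := by field_simp
    rw [h2, div_pow, gt_iff_lt, div_lt_div_iff₀ (by positivity) (by positivity)] at hE'
    nlinarith [hE', mul_pos hX2 hX2]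
  have hbx : 0 < β * X2 + X1 := by nlinarith [mul_pos hβ0 hX2]
  have ha : 0 < φ1 * φ2 * (β * X2 + X1) := by positivity
  have hb2 : (2 * φ2 * w) ^ 2 < (φ1 * φ2 * (β * X2 + X1)) ^ 2 := by
    nlinarith [hw2', hpoly, hX2, mul_pos (mul_pos hφ1 hφ2) hφ2,
      mul_pos hφ2 hφ2, sq_nonneg w]
  have hkey : 2 * φ2 * w < φ1 * φ2 * (β * X2 + X1) :=
    lt_of_pow_lt_pow_left₀ 2 (le_of_lt ha) hb2
  have hE0pos : 0 < φ1 * φ2 * (β * X2 + X1) - 2 * φ2 * w := by linarith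
  set s := min (X2 / 2) ((φ1 * φ2 * (β * X2 + X1) - 2 * φ2 * w) * X2 ^ 2 / (4 * φ2 ^ 2))
    with hs
  have hspos : 0 < s := lt_min (by positivity) (by positivity)
  have hs1 : s ≤ X2 / 2 := min_le_left _ _
  have hs2 : s ≤ (φ1 * φ2 * (β * X2 + X1) - 2 * φ2 * w) * X2 ^ 2 / (4 * φ2 ^ 2) :=
    min_le_right _ _
  have hs2' : 4 * φ2 ^ 2 * s ≤ (φ1 * φ2 * (β * X2 + X1) - 2 * φ2 * w) * X2 ^ 2 := by
    have := (le_div_iff₀ (by positivity : (0:ℝ) < 4 * φ2 ^ 2)).mp hs2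
    linarith
  have hD : 0 < X2 - s := by linarith
  -- key product positivity
  have h7 : 0 ≤ (X2 - s - X2 / 2) * (X2 * (φ1 * φ2 * (β * X2 + X1) - 2 * φ2 * w)) :=
    mul_nonneg (by linarith) (mul_nonneg (le_of_lt hX2) (le_of_lt hE0pos))
  have h5 : φ2 ^ 2 * s < X2 * (X2 - s) * (φ1 * φ2 * (β * X2 + X1) - 2 * φ2 * w) := by
    linarith [h7, hs2', mul_pos (mul_pos hX2 hX2) hE0pos]
  have hfin : 0 < s * (X2 - s) *
      (X2 * (X2 - s) * (φ1 * φ2 * (β * X2 + X1) - 2 * φ2 * w) - φ2 ^ 2 * s) :=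
    mul_pos (mul_pos hspos hD) (by linarith)
  -- the key square-comparison inequality
  have hA : (w + φ2 * s / (X2 * (X2 - s))) ^ 2 < φ1 * φ2 * (X1 + β * s) / (X2 - s) := by
    have hrw : w + φ2 * s / (X2 * (X2 - s))
        = (w * (X2 * (X2 - s)) + φ2 * s) / (X2 * (X2 - s)) := by
      field_simp
    rw [hrw, div_pow, div_lt_div_iff₀ (by positivity) hD]
    have hid : φ1 * φ2 * (X1 + β * s) * (X2 * (X2 - s)) ^ 2
        - (w * (X2 * (X2 - s)) + φ2 * s) ^ 2 * (X2 - s)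
        = s * (X2 - s) *
          (X2 * (X2 - s) * (φ1 * φ2 * (β * X2 + X1) - 2 * φ2 * w) - φ2 ^ 2 * s) := by
      linear_combination (-(X2 * (X2 - s) ^ 3)) * hw2'
    linarith [hfin, hid]
  have htpos : 0 < φ2 * s / (X2 * (X2 - s)) := by positivity
  have hsqrtA : w + φ2 * s / (X2 * (X2 - s))
      < Real.sqrt (φ1 * φ2 * (X1 + β * s) / (X2 - s)) :=
    (Real.lt_sqrt (by positivity)).mpr hA
  refine ⟨-s, Set.mem_Ioo.mpr ⟨by linarith, by linarith⟩, ?_, ?_⟩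
  · show (1 / 2) * Real.sqrt (φ1 * φ2 * (X1 - β * (-s)) / (X2 + -s))
      > (1 / 2) * Real.sqrt (φ1 * φ2 * (X1 - β * 0) / (X2 + 0))
    have e1 : φ1 * φ2 * (X1 - β * (-s)) / (X2 + -s)
        = φ1 * φ2 * (X1 + β * s) / (X2 - s) := by ring_nf
    have e2 : φ1 * φ2 * (X1 - β * 0) / (X2 + 0) = φ1 * φ2 * X1 / X2 := by ring_nf
    rw [e1, e2, ← hw]
    linarith
  · show φ2 * (1 - 1 / (2 * (X2 + -s)))
        + (1 / 2) * Real.sqrt (φ1 * φ2 * (X1 - β * (-s)) / (X2 + -s))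
      > φ2 * (1 - 1 / (2 * (X2 + 0)))
        + (1 / 2) * Real.sqrt (φ1 * φ2 * (X1 - β * 0) / (X2 + 0))
    have e1 : φ1 * φ2 * (X1 - β * (-s)) / (X2 + -s)
        = φ1 * φ2 * (X1 + β * s) / (X2 - s) := by ring_nf
    have e2 : φ1 * φ2 * (X1 - β * 0) / (X2 + 0) = φ1 * φ2 * X1 / X2 := by ring_nf
    have e3 : X2 + -s = X2 - s := by ring
    have e4 : X2 + (0:ℝ) = X2 := by ring
    rw [e1, e2, e3, e4, ← hw]
    have heq : φ2 * (1 - 1 / (2 * (X2 - s)))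
        + (1 / 2) * (w + φ2 * s / (X2 * (X2 - s)))
        = φ2 * (1 - 1 / (2 * X2)) + (1 / 2) * w := by
      field_simp
      ring
    linarith
end
end

section
/- Let φ1, φ2, X1, X2 be positive reals and β ∈ (0,1]. Define U1(τ) = (1/2)·φ1·(X1 − τ) + (1/2)·√( φ1·φ2·(X1 − τ)·(X2 + β·τ) ) on (−X2/β, X1). Then the derivative of U1 at τ = 0 is strictly positive if and only if 2·√(φ1·X1·X2/φ2) < β·X1 − X2. -/
/-!
With `s = √(φ1 φ2 X1 X2)` the chain rule gives `U1'(0) = φ1 (φ2 (β X1 - X2) - 2 s) / (4 s)`,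
whose sign is that of `φ2 (β X1 - X2) - 2 s`; and `s / φ2 = √(φ1 X1 X2 / φ2)`.
-/

open Real

lemma sqrt_div_eq_sqrt_mul_div (x : ℝ) {y : ℝ} (hy : 0 < y) : √(x / y) = √(x * y) / y := by
  have : 0 < √y := sqrt_pos.mpr hy
  rw [sqrt_div' x hy.le, sqrt_mul' x hy.le]
  field_simp
  rw [sq_sqrt hy.le]

lemma hasDerivAt_sqrt_mul_sub_mul_add_zero {c a b k : ℝ} (h : c * a * b ≠ 0) :
    HasDerivAt (fun τ : ℝ => √(c * (a - τ) * (b + k * τ)))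
      (c * (k * a - b) / (2 * √(c * a * b))) 0 := by
  have hpoly : HasDerivAt (fun τ : ℝ => c * (a - τ) * (b + k * τ)) (c * (k * a - b)) 0 :=
    ((((hasDerivAt_id' 0).const_sub a).const_mul c).mul
      (((hasDerivAt_id' 0).const_mul k).const_add b)).congr_deriv (by ring)
  simpa using hpoly.sqrt (by simpa using h)

theorem case3_payoff1_deriv_pos_iff_general (φ1 φ2 X1 X2 β : ℝ)
    (hφ1 : 0 < φ1) (hφ2 : 0 < φ2) (hX1 : 0 < X1) (hX2 : 0 < X2) :
    0 < deriv (fun τ : ℝ => (1 / 2) * φ1 * (X1 - τ) +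
        (1 / 2) * Real.sqrt (φ1 * φ2 * (X1 - τ) * (X2 + β * τ))) 0 ↔
      2 * Real.sqrt (φ1 * X1 * X2 / φ2) < β * X1 - X2 := by
  set s := √(φ1 * φ2 * X1 * X2)
  have hs : 0 < s := sqrt_pos.mpr (by positivity)
  have hU : HasDerivAt (fun τ : ℝ => (1 / 2) * φ1 * (X1 - τ) +
      (1 / 2) * √(φ1 * φ2 * (X1 - τ) * (X2 + β * τ)))
      (φ1 * (φ2 * (β * X1 - X2) - 2 * s) / (4 * s)) 0 :=
    ((((hasDerivAt_id' 0).const_sub X1).const_mul ((1 / 2) * φ1)).add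
      ((hasDerivAt_sqrt_mul_sub_mul_add_zero (c := φ1 * φ2) (k := β)
        (by positivity : φ1 * φ2 * X1 * X2 ≠ 0)).const_mul (1 / 2))).congr_deriv
        (by field_simp; ring)
  have hrhs : √(φ1 * X1 * X2 / φ2) = s / φ2 := by
    rw [sqrt_div_eq_sqrt_mul_div _ hφ2, show φ1 * X1 * X2 * φ2 = φ1 * φ2 * X1 * X2 by ring]
  rw [hU.deriv, hrhs, div_pos_iff_of_pos_right (by positivity), mul_pos_iff_of_pos_left hφ1,
    sub_pos, mul_div_assoc', div_lt_iff₀' hφ2]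

/-- In Case 3, Player 1's payoff has strictly positive derivative at `τ = 0`
iff `2√(φ1X1X2/φ2) < βX1 − X2`. -/
theorem case3_payoff1_deriv_pos_iff (φ1 φ2 X1 X2 β : ℝ)
    (hφ1 : 0 < φ1) (hφ2 : 0 < φ2) (hX1 : 0 < X1) (hX2 : 0 < X2)
    (hβ0 : 0 < β) (hβ1 : β ≤ 1) :
    0 < deriv (fun τ : ℝ => (1 / 2) * φ1 * (X1 - τ) +
        (1 / 2) * Real.sqrt (φ1 * φ2 * (X1 - τ) * (X2 + β * τ))) 0 ↔
      2 * Real.sqrt (φ1 * X1 * X2 / φ2) < β * X1 - X2 :=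
  case3_payoff1_deriv_pos_iff_general φ1 φ2 X1 X2 β hφ1 hφ2 hX1 hX2
end

section
/- Let φ1, φ2, X1, X2 be positive reals and β ∈ (0,1]. Define U2(τ) = (1/2)·φ2·(X2 + τ) + (1/2)·√( φ1·φ2·(X1 − β·τ)·(X2 + τ) ) on (−X2, X1/β). Then the derivative of U2 at τ = 0 is strictly negative if and only if β > √(4·φ2·X1/(φ1·X2)) + X1/X2. -/
/-!
At `τ = 0` the payoff has derivative `φ2 / 2 + φ1 φ2 (X1 - β X2) / (4 s)` with
`s = √(φ1 φ2 X1 X2)`, a positive multiple of `2 s + φ1 X1 - β φ1 X2`. Its sign is therefore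
that of `(2 s + φ1 X1) / (φ1 X2) - β`, and `2 s / (φ1 X2)` is exactly `√(4 φ2 X1 / (φ1 X2))`.
-/

open Real

lemma hasDerivAt_sqrt_mul_sub_mul_add {k a b d : ℝ} (h : k * a * d ≠ 0) :
    HasDerivAt (fun τ : ℝ => √(k * (a - b * τ) * (d + τ)))
      (k * (a - b * d) / (2 * √(k * a * d))) 0 := by
  have h1 : HasDerivAt (fun τ : ℝ => a - b * τ) (-b) 0 := by
    simpa using ((hasDerivAt_id (0 : ℝ)).const_mul b).const_sub a
  have h2 : HasDerivAt (fun τ : ℝ => d + τ) 1 0 := (hasDerivAt_id 0).const_add d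
  have hpoly : HasDerivAt (fun τ : ℝ => k * (a - b * τ) * (d + τ)) (k * (a - b * d)) 0 :=
    ((h1.const_mul k).mul h2).congr_deriv (by ring)
  simpa using hpoly.sqrt (by simpa using h)

lemma deriv_case3_payoff2_zero {φ1 φ2 X1 X2 β : ℝ} (h : φ1 * φ2 * X1 * X2 ≠ 0) :
    deriv (fun τ : ℝ => (1 / 2) * φ2 * (X2 + τ) +
        (1 / 2) * √(φ1 * φ2 * (X1 - β * τ) * (X2 + τ))) 0 =
      φ2 / 2 + φ1 * φ2 * (X1 - β * X2) / (4 * √(φ1 * φ2 * X1 * X2)) := by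
  have hlin : HasDerivAt (fun τ : ℝ => (1 / 2) * φ2 * (X2 + τ)) ((1 / 2) * φ2 * 1) 0 :=
    ((hasDerivAt_id (0 : ℝ)).const_add X2).const_mul _
  refine (hlin.add ((hasDerivAt_sqrt_mul_sub_mul_add h).const_mul (1 / 2))).deriv.trans ?_
  field_simp
  ring

lemma sqrt_four_mul_div_eq {φ1 φ2 X1 X2 : ℝ} (h : 0 < φ1 * X2) :
    √(4 * φ2 * X1 / (φ1 * X2)) = 2 * √(φ1 * φ2 * X1 * X2) / (φ1 * X2) := by
  have hsq : 4 * φ2 * X1 / (φ1 * X2) = 4 * (φ1 * φ2 * X1 * X2) / (φ1 * X2) ^ 2 := by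
    field_simp
  rw [hsq, sqrt_div' _ (sq_nonneg _), sqrt_sq h.le, sqrt_mul zero_le_four]
  norm_num

theorem case3_payoff2_deriv_neg_iff_general (φ1 φ2 X1 X2 β : ℝ)
    (hφ1 : 0 < φ1) (hφ2 : 0 < φ2) (hX1 : 0 < X1) (hX2 : 0 < X2) :
    deriv (fun τ : ℝ => (1 / 2) * φ2 * (X2 + τ) +
        (1 / 2) * Real.sqrt (φ1 * φ2 * (X1 - β * τ) * (X2 + τ))) 0 < 0 ↔
      β > Real.sqrt (4 * φ2 * X1 / (φ1 * X2)) + X1 / X2 := by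
  have hP : 0 < φ1 * φ2 * X1 * X2 := by positivity
  rw [deriv_case3_payoff2_zero hP.ne', sqrt_four_mul_div_eq (by positivity)]
  set s := √(φ1 * φ2 * X1 * X2)
  have hs : 0 < s := sqrt_pos.2 hP
  have hfactor : φ2 / 2 + φ1 * φ2 * (X1 - β * X2) / (4 * s) =
      φ2 / (4 * s) * (2 * s + φ1 * X1 - β * (φ1 * X2)) := by
    field_simp
    ring
  have hsplit : 2 * s / (φ1 * X2) + X1 / X2 = (2 * s + φ1 * X1) / (φ1 * X2) := by
    field_simp
  rw [hfactor, ← smul_eq_mul, smul_neg_iff_of_pos_left (by positivity), sub_neg, hsplit,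
    gt_iff_lt, div_lt_iff₀ (by positivity)]

/-- In Case 3, Player 2's payoff has strictly negative derivative at `τ = 0`
iff `β > √(4φ2X1/(φ1X2)) + X1/X2`. -/
theorem case3_payoff2_deriv_neg_iff (φ1 φ2 X1 X2 β : ℝ)
    (hφ1 : 0 < φ1) (hφ2 : 0 < φ2) (hX1 : 0 < X1) (hX2 : 0 < X2)
    (hβ0 : 0 < β) (hβ1 : β ≤ 1) :
    deriv (fun τ : ℝ => (1 / 2) * φ2 * (X2 + τ) +
        (1 / 2) * Real.sqrt (φ1 * φ2 * (X1 - β * τ) * (X2 + τ))) 0 < 0 ↔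
      β > Real.sqrt (4 * φ2 * X1 / (φ1 * X2)) + X1 / X2 :=
  case3_payoff2_deriv_neg_iff_general φ1 φ2 X1 X2 β hφ1 hφ2 hX1 hX2
end

section
/- Let φ1, φ2, X1, X2 be positive reals and β ∈ (0,1]. Define U2(τ) = (1/2)·φ2·(X2 + τ) + (1/2)·√( φ1·φ2·(X1 − β·τ)·(X2 + τ) ) on (−X2, X1/β). If the derivative of U2 at τ = 0 is nonnegative, then the derivative of U2 at every τ ∈ (−X2, 0] is nonnegative. -/
/-!
On `(-X2, X1/β)` the radicand `φ1 φ2 (X1 - βτ)(X2 + τ)` is a positive concave quadratic, so its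
square root, and with it `U2`, is concave there. The derivative of a differentiable concave
function is antitone, hence `U2'(τ) ≥ U2'(0) ≥ 0` for `τ ≤ 0`.
-/

open Set

lemma concaveOn_affine_mul_affine {a b c d : ℝ} (h : b * d ≤ 0) :
    ConcaveOn ℝ univ (fun t : ℝ => (a + b * t) * (c + d * t)) := by
  refine ⟨convex_univ, fun x _ y _ μ ν hμ hν hμν => ?_⟩
  obtain rfl : ν = 1 - μ := by linarith
  simp only [smul_eq_mul]
  -- the defect of the chord is `-b d μ (1 - μ) (x - y)^2`
  nlinarith [mul_nonneg (mul_nonneg (neg_nonneg.mpr h) (mul_nonneg hμ hν)) (sq_nonneg (x - y))]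

lemma ConcaveOn.sqrt {s : Set ℝ} {f : ℝ → ℝ} (hf : ConcaveOn ℝ s f)
    (hf₀ : ∀ x ∈ s, 0 ≤ f x) : ConcaveOn ℝ s (fun x => √(f x)) := by
  refine ⟨hf.1, fun x hx y hy a b ha hb hab => ?_⟩
  calc a • √(f x) + b • √(f y) ≤ √(a • f x + b • f y) :=
        Real.strictConcaveOn_sqrt.concaveOn.2 (hf₀ x hx) (hf₀ y hy) ha hb hab
    _ ≤ √(f (a • x + b • y)) := Real.sqrt_le_sqrt (hf.2 hx hy ha hb hab)

noncomputable def case3Payoff2 (φ1 φ2 X1 X2 β τ : ℝ) : ℝ :=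
  (1 / 2) * φ2 * (X2 + τ) + (1 / 2) * √(φ1 * φ2 * (X1 - β * τ) * (X2 + τ))

section

variable {φ1 φ2 X1 X2 β : ℝ}

lemma case3_radicand_pos (hφ : 0 < φ1 * φ2) (hβ : 0 < β) {τ : ℝ}
    (hτ : τ ∈ Ioo (-X2) (X1 / β)) : 0 < φ1 * φ2 * (X1 - β * τ) * (X2 + τ) := by
  have h₁ : 0 < X1 - β * τ := by
    have := (lt_div_iff₀' hβ).mp hτ.2
    linarith
  have h₂ : 0 < X2 + τ := by linarith [hτ.1]
  positivity

lemma concaveOn_case3Payoff2 (hφ : 0 < φ1 * φ2) (hβ : 0 < β) :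
    ConcaveOn ℝ (Ioo (-X2) (X1 / β)) (case3Payoff2 φ1 φ2 X1 X2 β) := by
  have hradicand : ConcaveOn ℝ univ (fun t => φ1 * φ2 * (X1 - β * t) * (X2 + t)) := by
    convert concaveOn_affine_mul_affine (a := φ1 * φ2 * X1) (b := -(φ1 * φ2 * β)) (c := X2)
      (d := 1) (by nlinarith) using 2 with t
    ring
  have hsqrt := (hradicand.subset (subset_univ _) (convex_Ioo _ _)).sqrt
    fun t ht => (case3_radicand_pos hφ hβ ht).le
  have haffine : ConcaveOn ℝ (Ioo (-X2) (X1 / β)) (fun t => (1 / 2) * φ2 * (X2 + t)) :=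
    ⟨convex_Ioo _ _, fun x _ y _ a b _ _ hab => le_of_eq (by
      simp only [smul_eq_mul]; linear_combination (1 / 2) * φ2 * X2 * hab)⟩
  exact haffine.add (hsqrt.smul (by norm_num : (0 : ℝ) ≤ 1 / 2))

lemma differentiableAt_case3Payoff2 (hφ : 0 < φ1 * φ2) (hβ : 0 < β) {τ : ℝ}
    (hτ : τ ∈ Ioo (-X2) (X1 / β)) : DifferentiableAt ℝ (case3Payoff2 φ1 φ2 X1 X2 β) τ := by
  have hradicand : DifferentiableAt ℝ (fun t => φ1 * φ2 * (X1 - β * t) * (X2 + t)) τ := by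
    fun_prop
  unfold case3Payoff2
  exact (by fun_prop : DifferentiableAt ℝ (fun t => (1 / 2) * φ2 * (X2 + t)) τ).add
    ((hradicand.sqrt (case3_radicand_pos hφ hβ hτ).ne').const_mul _)

end

theorem case3_payoff2_deriv_nonneg_persists_general (φ1 φ2 X1 X2 β : ℝ)
    (hφ1 : 0 < φ1) (hφ2 : 0 < φ2) (hX1 : 0 < X1)
    (hβ0 : 0 < β)
    (h0 : 0 ≤ deriv (fun τ : ℝ => (1 / 2) * φ2 * (X2 + τ) +
        (1 / 2) * Real.sqrt (φ1 * φ2 * (X1 - β * τ) * (X2 + τ))) 0) :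
    ∀ τ ∈ Set.Ioc (-X2) (0 : ℝ),
      0 ≤ deriv (fun τ : ℝ => (1 / 2) * φ2 * (X2 + τ) +
        (1 / 2) * Real.sqrt (φ1 * φ2 * (X1 - β * τ) * (X2 + τ))) τ := by
  rintro τ ⟨hτX2, hτ0⟩
  have hφ : 0 < φ1 * φ2 := mul_pos hφ1 hφ2
  have h0mem : (0 : ℝ) ∈ Ioo (-X2) (X1 / β) := ⟨hτX2.trans_le hτ0, div_pos hX1 hβ0⟩
  have hτmem : τ ∈ Ioo (-X2) (X1 / β) := ⟨hτX2, hτ0.trans_lt h0mem.2⟩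
  have hantitone : AntitoneOn (deriv (case3Payoff2 φ1 φ2 X1 X2 β)) (Ioo (-X2) (X1 / β)) :=
    (concaveOn_case3Payoff2 hφ hβ0).antitoneOn_deriv
      fun _ ht => differentiableAt_case3Payoff2 hφ hβ0 ht
  exact h0.trans (hantitone hτmem h0mem hτ0)

/-- In Case 3, if Player 2's payoff derivative at `τ = 0` is nonnegative, it
remains nonnegative on all of `(-X2, 0]`. -/
theorem case3_payoff2_deriv_nonneg_persists (φ1 φ2 X1 X2 β : ℝ)
    (hφ1 : 0 < φ1) (hφ2 : 0 < φ2) (hX1 : 0 < X1) (hX2 : 0 < X2)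
    (hβ0 : 0 < β) (hβ1 : β ≤ 1)
    (h0 : 0 ≤ deriv (fun τ : ℝ => (1 / 2) * φ2 * (X2 + τ) +
        (1 / 2) * Real.sqrt (φ1 * φ2 * (X1 - β * τ) * (X2 + τ))) 0) :
    ∀ τ ∈ Set.Ioc (-X2) (0 : ℝ),
      0 ≤ deriv (fun τ : ℝ => (1 / 2) * φ2 * (X2 + τ) +
        (1 / 2) * Real.sqrt (φ1 * φ2 * (X1 - β * τ) * (X2 + τ))) τ :=
  case3_payoff2_deriv_nonneg_persists_general φ1 φ2 X1 X2 β hφ1 hφ2 hX1 hβ0 h0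
end

section
/- Let φ1, φ2, X1, X2 be positive reals and β ∈ (0,1] with β > √(4·φ2·X1/(φ1·X2)) + X1/X2. Define U1(τ) = (1/2)·φ1·(X1 − β·τ) + (1/2)·√( φ1·φ2·(X1 − β·τ)·(X2 + τ) ) and U2(τ) = (1/2)·φ2·(X2 + τ) + (1/2)·√( φ1·φ2·(X1 − β·τ)·(X2 + τ) ). Then there exists τ ∈ (−X2, 0) with U1(τ) > U1(0) and U2(τ) > U2(0). -/
noncomputable section

set_option maxHeartbeats 1000000 in
/-- In Case 3, if `β > √(4φ2X1/(φ1X2)) + X1/X2`, then some negative transfer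
strictly improves both players' payoffs. -/
theorem case3_mutually_beneficial_exists (φ1 φ2 X1 X2 β : ℝ)
    (hφ1 : 0 < φ1) (hφ2 : 0 < φ2) (hX1 : 0 < X1) (hX2 : 0 < X2)
    (hβ0 : 0 < β) (hβ1 : β ≤ 1)
    (hβ : β > Real.sqrt (4 * φ2 * X1 / (φ1 * X2)) + X1 / X2) :
    ∃ τ ∈ Set.Ioo (-X2) (0 : ℝ),
      (fun τ : ℝ => (1 / 2) * φ1 * (X1 - β * τ) +
          (1 / 2) * Real.sqrt (φ1 * φ2 * (X1 - β * τ) * (X2 + τ))) τ >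
        (fun τ : ℝ => (1 / 2) * φ1 * (X1 - β * τ) +
          (1 / 2) * Real.sqrt (φ1 * φ2 * (X1 - β * τ) * (X2 + τ))) 0 ∧
      (fun τ : ℝ => (1 / 2) * φ2 * (X2 + τ) +
          (1 / 2) * Real.sqrt (φ1 * φ2 * (X1 - β * τ) * (X2 + τ))) τ >
        (fun τ : ℝ => (1 / 2) * φ2 * (X2 + τ) +
          (1 / 2) * Real.sqrt (φ1 * φ2 * (X1 - β * τ) * (X2 + τ))) 0 := by
  set s := Real.sqrt (φ1 * φ2 * X1 * X2) with hs_def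
  have hs0 : 0 ≤ s := Real.sqrt_nonneg _
  have hs2 : s ^ 2 = φ1 * φ2 * X1 * X2 := Real.sq_sqrt (by positivity)
  set r := Real.sqrt (4 * φ2 * X1 / (φ1 * X2)) with hr_def
  have hr0 : 0 ≤ r := Real.sqrt_nonneg _
  have hr2 : r ^ 2 = 4 * φ2 * X1 / (φ1 * X2) := Real.sq_sqrt (by positivity)
  clear_value s r
  have hr2' : r ^ 2 * (φ1 * X2) = 4 * φ2 * X1 := by
    rw [hr2]; field_simp
  -- β X2 - X1 > X2 r
  have hβX : β * X2 - X1 > X2 * r := by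
    have h := mul_lt_mul_of_pos_right hβ hX2
    have hx : X1 / X2 * X2 = X1 := by field_simp
    nlinarith [h]
  -- φ1 X2 r = 2 s
  have heq : φ1 * X2 * r = 2 * s := by
    have h1 : (φ1 * X2 * r) ^ 2 = (2 * s) ^ 2 := by
      have h : (φ1 * X2 * r) ^ 2 = (φ1 * X2) * (r ^ 2 * (φ1 * X2)) := by ring
      rw [h, hr2']; nlinarith [hs2]
    have h2 : 0 ≤ φ1 * X2 * r := by positivity
    have h3 : 0 ≤ 2 * s := by linarith
    nlinarith [sq_nonneg (φ1 * X2 * r - 2 * s), sq_nonneg (φ1 * X2 * r + 2 * s)]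
  obtain ⟨δ, hδ_def⟩ : ∃ δ : ℝ, δ = φ1 * (β * X2 - X1) - 2 * s := ⟨_, rfl⟩
  have hδ : 0 < δ := by
    have h : φ1 * (β * X2 - X1) > φ1 * (X2 * r) := mul_lt_mul_of_pos_left hβX hφ1
    have h2 : φ1 * (X2 * r) = 2 * s := by linarith [heq]
    rw [hδ_def]; linarith
  obtain ⟨t, ht_def⟩ : ∃ t : ℝ, t = min (δ / (2 * (φ1 * β + φ2))) (X2 / 2) := ⟨_, rfl⟩
  have hden : 0 < φ1 * β + φ2 := by positivity
  have ht0 : 0 < t := by rw [ht_def]; exact lt_min (by positivity) (by positivity)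
  have htX2 : t < X2 := by
    rw [ht_def]; exact lt_of_le_of_lt (min_le_right _ _) (by linarith)
  have htδ : (φ1 * β + φ2) * t < δ := by
    have h1 : t ≤ δ / (2 * (φ1 * β + φ2)) := ht_def ▸ min_le_left _ _
    have h2 : (φ1 * β + φ2) * t ≤ δ / 2 := by
      rw [le_div_iff₀ (by positivity : (0:ℝ) < 2 * (φ1 * β + φ2))] at h1
      nlinarith
    linarith
  clear ht_def
  -- key inequality
  have hX2t : 0 < X2 - t := by linarith
  have key : s + φ2 * t < Real.sqrt (φ1 * φ2 * (X1 + β * t) * (X2 - t)) := by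
    rw [show s + φ2 * t < Real.sqrt (φ1 * φ2 * (X1 + β * t) * (X2 - t)) ↔
        (s + φ2 * t) ^ 2 < φ1 * φ2 * (X1 + β * t) * (X2 - t) from
      Real.lt_sqrt (by positivity)]
    have hmul : φ2 * t * ((φ1 * β + φ2) * t) < φ2 * t * δ :=
      mul_lt_mul_of_pos_left htδ (by positivity)
    rw [hδ_def] at hmul
    nlinarith [hs2, hmul]
  clear hδ_def
  refine ⟨-t, ⟨by linarith, by linarith⟩, ?_, ?_⟩
  · show (1 / 2) * φ1 * (X1 - β * (-t)) +
        (1 / 2) * Real.sqrt (φ1 * φ2 * (X1 - β * (-t)) * (X2 + (-t))) >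
        (1 / 2) * φ1 * (X1 - β * 0) +
        (1 / 2) * Real.sqrt (φ1 * φ2 * (X1 - β * 0) * (X2 + 0))
    rw [show φ1 * φ2 * (X1 - β * (-t)) * (X2 + (-t)) =
        φ1 * φ2 * (X1 + β * t) * (X2 - t) from by ring,
      show φ1 * φ2 * (X1 - β * 0) * (X2 + 0) = φ1 * φ2 * X1 * X2 from by ring,
      ← hs_def]
    have h5 : φ1 * (X1 - β * (-t)) > φ1 * (X1 - β * 0) := by nlinarith [mul_pos hφ1 (mul_pos hβ0 ht0)]
    have hφ2t : 0 < φ2 * t := by positivity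
    linarith [key, h5]
  · show (1 / 2) * φ2 * (X2 + (-t)) +
        (1 / 2) * Real.sqrt (φ1 * φ2 * (X1 - β * (-t)) * (X2 + (-t))) >
        (1 / 2) * φ2 * (X2 + 0) +
        (1 / 2) * Real.sqrt (φ1 * φ2 * (X1 - β * 0) * (X2 + 0))
    rw [show φ1 * φ2 * (X1 - β * (-t)) * (X2 + (-t)) =
        φ1 * φ2 * (X1 + β * t) * (X2 - t) from by ring,
      show φ1 * φ2 * (X1 - β * 0) * (X2 + 0) = φ1 * φ2 * X1 * X2 from by ring,
      ← hs_def]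
    have h5 : φ2 * (X2 + -t) = φ2 * (X2 + 0) - φ2 * t := by ring
    linarith [key, h5]
end
end

section
/- Let φ1, φ2, X1, X2 be positive reals and β ∈ (0,1]. Define F(τ) = φ2·(1 − 1/(2·(X2 + β·τ))) + √( φ1·φ2·(X1 − τ)/(X2 + β·τ) ) on (−X2/β, X1). Then for every τ ∈ [0, X1), the derivative of F at τ is strictly positive if and only if X1 + X2/β < √( φ2·(X1 − τ)/(φ1·(X2 + β·τ)) ). -/
/-!
With `D = X2 + βτ` and `s = √(φ1 φ2 (X1 - τ) / D)`, the derivative of the first term is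
`φ2 β / (2 D²)` and that of the square root is `-φ1 φ2 (X2 + β X1) / (2 D² s)`, since the
derivative of `(X1 - t) / (X2 + β t)` has the `t`-free numerator `-(X2 + β X1)`. Hence
`F'(τ) = φ2 β / (2 D² s) · (s - φ1 (X1 + X2 / β))`, whose sign is that of
`s / φ1 - (X1 + X2 / β)`, and `s / φ1` is exactly `√(φ2 (X1 - τ) / (φ1 D))`.
-/

namespace CoalitionalBlotto

variable {φ1 φ2 X1 X2 β τ : ℝ}

theorem hasDerivAt_const_mul_one_sub_inv_affine (hD : X2 + β * τ ≠ 0) :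
    HasDerivAt (fun t : ℝ => φ2 * (1 - 1 / (2 * (X2 + β * t))))
      (φ2 * β / (2 * (X2 + β * τ) ^ 2)) τ := by
  have hden : HasDerivAt (fun t : ℝ => 2 * (X2 + β * t)) (2 * β) τ := by
    simpa using (((hasDerivAt_id τ).const_mul β).const_add X2).const_mul 2
  refine ((((hasDerivAt_const τ (1 : ℝ)).div hden (mul_ne_zero two_ne_zero hD)).const_sub
    1).const_mul φ2).congr_deriv ?_
  field_simp
  ring

theorem hasDerivAt_sqrt_mul_sub_div_affine {c : ℝ} (hpos : 0 < c * (X1 - τ) / (X2 + β * τ)) :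
    HasDerivAt (fun t : ℝ => √(c * (X1 - t) / (X2 + β * t)))
      (-(c * (X2 + β * X1)) / (2 * (X2 + β * τ) ^ 2 * √(c * (X1 - τ) / (X2 + β * τ)))) τ := by
  have hD : X2 + β * τ ≠ 0 := by
    rintro hD
    simp [hD] at hpos
  have hnum : HasDerivAt (fun t : ℝ => c * (X1 - t)) (-c) τ := by
    simpa using ((hasDerivAt_const τ X1).sub (hasDerivAt_id τ)).const_mul c
  have hden : HasDerivAt (fun t : ℝ => X2 + β * t) β τ := by
    simpa using ((hasDerivAt_id τ).const_mul β).const_add X2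
  have hquot : HasDerivAt (fun t : ℝ => c * (X1 - t) / (X2 + β * t))
      (-(c * (X2 + β * X1)) / (X2 + β * τ) ^ 2) τ :=
    (hnum.div hden hD).congr_deriv (by ring)
  refine (hquot.sqrt hpos.ne').congr_deriv ?_
  field_simp

theorem sqrt_mul_div_mul_eq_sqrt_div {a b x y : ℝ} (ha : 0 < a) :
    √(b * x / (a * y)) = √(a * b * x / y) / a := by
  have hsq : a * b * x / y = a ^ 2 * (b * x / (a * y)) := by
    field_simp
  rw [hsq, Real.sqrt_mul (sq_nonneg a), Real.sqrt_sq ha.le, mul_div_cancel_left₀ _ ha.ne']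

end CoalitionalBlotto

open CoalitionalBlotto in
theorem case2_alliance_deriv_pos_iff_general (φ1 φ2 X1 X2 β : ℝ)
    (hφ1 : 0 < φ1) (hφ2 : 0 < φ2) (hX2 : 0 < X2)
    (hβ0 : 0 < β) :
    ∀ τ ∈ Set.Ico (0 : ℝ) X1,
      (0 < deriv (fun τ : ℝ => φ2 * (1 - 1 / (2 * (X2 + β * τ))) +
          Real.sqrt (φ1 * φ2 * (X1 - τ) / (X2 + β * τ))) τ ↔
        X1 + X2 / β < Real.sqrt (φ2 * (X1 - τ) / (φ1 * (X2 + β * τ)))) := by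
  rintro τ ⟨hτ0, hτX1⟩
  have hD : 0 < X2 + β * τ := by positivity
  have hg : 0 < φ1 * φ2 * (X1 - τ) / (X2 + β * τ) :=
    div_pos (mul_pos (mul_pos hφ1 hφ2) (sub_pos.mpr hτX1)) hD
  set s := √(φ1 * φ2 * (X1 - τ) / (X2 + β * τ))
  have hs : 0 < s := Real.sqrt_pos.mpr hg
  have hderiv : HasDerivAt (fun t : ℝ => φ2 * (1 - 1 / (2 * (X2 + β * t))) +
        √(φ1 * φ2 * (X1 - t) / (X2 + β * t)))
      (φ2 * β / (2 * (X2 + β * τ) ^ 2) +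
        -(φ1 * φ2 * (X2 + β * X1)) / (2 * (X2 + β * τ) ^ 2 * s)) τ :=
    (hasDerivAt_const_mul_one_sub_inv_affine hD.ne').add (hasDerivAt_sqrt_mul_sub_div_affine hg)
  have hfactor : φ2 * β / (2 * (X2 + β * τ) ^ 2) +
      -(φ1 * φ2 * (X2 + β * X1)) / (2 * (X2 + β * τ) ^ 2 * s) =
      φ2 * β / (2 * (X2 + β * τ) ^ 2 * s) * (s - φ1 * (X1 + X2 / β)) := by
    field_simp
    ring
  rw [hderiv.deriv, hfactor, mul_pos_iff_of_pos_left (by positivity), sub_pos,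
    sqrt_mul_div_mul_eq_sqrt_div hφ1, lt_div_iff₀ hφ1, mul_comm]

/-- In Case 2 with a positive transfer, the alliance payoff has strictly
positive derivative at `τ ∈ [0, X1)` iff
`X1 + X2/β < √(φ2(X1−τ)/(φ1(X2+βτ)))`. -/
theorem case2_alliance_deriv_pos_iff (φ1 φ2 X1 X2 β : ℝ)
    (hφ1 : 0 < φ1) (hφ2 : 0 < φ2) (hX1 : 0 < X1) (hX2 : 0 < X2)
    (hβ0 : 0 < β) (hβ1 : β ≤ 1) :
    ∀ τ ∈ Set.Ico (0 : ℝ) X1,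
      (0 < deriv (fun τ : ℝ => φ2 * (1 - 1 / (2 * (X2 + β * τ))) +
          Real.sqrt (φ1 * φ2 * (X1 - τ) / (X2 + β * τ))) τ ↔
        X1 + X2 / β < Real.sqrt (φ2 * (X1 - τ) / (φ1 * (X2 + β * τ)))) :=
  case2_alliance_deriv_pos_iff_general φ1 φ2 X1 X2 β hφ1 hφ2 hX2 hβ0
end

section
/- Let φ1, φ2, X1, X2 be positive reals and β ∈ (0,1], and suppose φ2·X1 ≤ φ1·X2 and 1 − √(φ1·X1·X2/φ2) ≤ X2 (Case 2 condition). Then the function F(τ) = φ2·(1 − 1/(2·(X2 + β·τ))) + √( φ1·φ2·(X1 − τ)/(X2 + β·τ) ) is nonincreasing on [0, X1). (In Case 2, no positive transfer increases the alliance payoff.) -/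
/-! With `Y = X₂ + βτ` and `g = φ₁φ₂(X₁ - τ)/Y`, the derivative of the payoff is
`φ₂β/(2Y²) - φ₁φ₂(X₂ + βX₁)/(2√g Y²)`, which is nonpositive iff `β²φ₂(X₁ - τ) ≤ φ₁(X₂ + βX₁)²Y`.
On `[0, X₁)` the worst case is `τ = 0`, i.e. `β²φ₂X₁ ≤ φ₁X₂(X₂ + βX₁)²`. Writing
`s = √(φ₁X₁X₂/φ₂)`, this is `βX₁ ≤ s(X₂ + βX₁)`: the ordering `φ₂X₁ ≤ φ₁X₂` gives `X₁ ≤ s`, and the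
Case 2 condition gives `β(1 - s) ≤ X₂`, whence `βX₁(1 - s) ≤ X₁X₂ ≤ sX₂`. -/

noncomputable section

open Set

lemma hasDerivAt_mul_sub_div_add_mul (k a b c x : ℝ) (h : b + c * x ≠ 0) :
    HasDerivAt (fun τ => k * (a - τ) / (b + c * τ)) (-k * (b + c * a) / (b + c * x) ^ 2) x := by
  have hden : HasDerivAt (fun τ => b + c * τ) c x := by
    simpa using ((hasDerivAt_id x).const_mul c).const_add b
  have hnum : HasDerivAt (fun τ => k * (a - τ)) (-k) x := by
    simpa using ((hasDerivAt_id x).const_sub a).const_mul k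
  exact (hnum.div hden h).congr_deriv (by ring)

def alliancePayoff (φ1 φ2 X1 X2 β τ : ℝ) : ℝ :=
  φ2 * (1 - 1 / (2 * (X2 + β * τ))) + √(φ1 * φ2 * (X1 - τ) / (X2 + β * τ))

def alliancePayoffDeriv (φ1 φ2 X1 X2 β τ : ℝ) : ℝ :=
  φ2 * β / (2 * (X2 + β * τ) ^ 2) - φ1 * φ2 * (X2 + β * X1) /
      (2 * √(φ1 * φ2 * (X1 - τ) / (X2 + β * τ)) * (X2 + β * τ) ^ 2)

section

variable {φ1 φ2 X1 X2 β : ℝ}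

lemma case2_transfer_bound (hφ1 : 0 < φ1) (hφ2 : 0 < φ2) (hX1 : 0 < X1) (hX2 : 0 < X2)
    (hβ0 : 0 < β) (hβ1 : β ≤ 1) (hord : φ2 * X1 ≤ φ1 * X2)
    (hcase2 : 1 - √(φ1 * X1 * X2 / φ2) ≤ X2) :
    β ^ 2 * (φ2 * X1) ≤ φ1 * X2 * (X2 + β * X1) ^ 2 := by
  set s := √(φ1 * X1 * X2 / φ2)
  have hs2 : φ2 * s ^ 2 = φ1 * X1 * X2 := by
    rw [Real.sq_sqrt (by positivity)]
    field_simp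
  have hX1s : X1 ≤ s := Real.le_sqrt_of_sq_le <| by
    rw [le_div_iff₀ hφ2]
    nlinarith [mul_le_mul_of_nonneg_left hord hX1.le]
  have hlin : β * X1 ≤ s * (X2 + β * X1) := by
    rcases le_total s 1 with hs1 | hs1
    · nlinarith [mul_le_mul_of_nonneg_right hβ1 (sub_nonneg.2 hs1),
        mul_le_mul_of_nonneg_right hX1s hX2.le]
    · nlinarith [mul_nonneg (mul_nonneg hβ0.le hX1.le) (sub_nonneg.2 hs1), mul_pos hX1 hX2]
  have hsq : φ2 * (β * X1) ^ 2 ≤ φ2 * (s * (X2 + β * X1)) ^ 2 :=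
    mul_le_mul_of_nonneg_left (pow_le_pow_left₀ (by positivity) hlin 2) hφ2.le
  nlinarith [hsq]

lemma hasDerivAt_alliancePayoff {τ : ℝ} (hY : X2 + β * τ ≠ 0)
    (hg : φ1 * φ2 * (X1 - τ) / (X2 + β * τ) ≠ 0) :
    HasDerivAt (alliancePayoff φ1 φ2 X1 X2 β) (alliancePayoffDeriv φ1 φ2 X1 X2 β τ) τ := by
  have h2Y : HasDerivAt (fun τ => 2 * (X2 + β * τ)) (2 * β) τ := by
    simpa using (((hasDerivAt_id τ).const_mul β).const_add X2).const_mul 2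
  have hfirst := ((hasDerivAt_const τ 1).div h2Y (mul_ne_zero two_ne_zero hY)).const_sub 1
    |>.const_mul φ2
  have hsecond := (hasDerivAt_mul_sub_div_add_mul (φ1 * φ2) X1 X2 β τ hY).sqrt hg
  refine (hfirst.add hsecond).congr_deriv ?_
  rw [alliancePayoffDeriv]
  generalize √(φ1 * φ2 * (X1 - τ) / (X2 + β * τ)) = r
  generalize X2 + β * τ = Y
  ring

lemma alliancePayoff_deriv_nonpos {τ : ℝ} (hφ1 : 0 < φ1) (hφ2 : 0 < φ2) (hX2 : 0 < X2)
    (hβ : 0 ≤ β) (hτ : τ ∈ Ico 0 X1)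
    (hbound : β ^ 2 * (φ2 * X1) ≤ φ1 * X2 * (X2 + β * X1) ^ 2) :
    alliancePayoffDeriv φ1 φ2 X1 X2 β τ ≤ 0 := by
  obtain ⟨hτ0, hτX1⟩ := hτ
  have hX1 : 0 < X1 := hτ0.trans_lt hτX1
  have hY : 0 < X2 + β * τ := by positivity
  have hg : 0 < φ1 * φ2 * (X1 - τ) / (X2 + β * τ) := by
    have : 0 < X1 - τ := sub_pos.2 hτX1
    positivity
  have hτbound : β ^ 2 * (φ2 * (X1 - τ)) ≤ φ1 * (X2 + β * X1) ^ 2 * (X2 + β * τ) := by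
    nlinarith [mul_nonneg (mul_nonneg (sq_nonneg β) hφ2.le) hτ0,
      mul_nonneg (mul_nonneg hφ1.le (sq_nonneg (X2 + β * X1))) (mul_nonneg hβ hτ0)]
  have hroot : β * √(φ1 * φ2 * (X1 - τ) / (X2 + β * τ)) ≤ φ1 * (X2 + β * X1) := by
    refine le_of_pow_le_pow_left₀ two_ne_zero (by positivity) ?_
    rw [mul_pow, Real.sq_sqrt hg.le, ← mul_div_assoc, div_le_iff₀ hY]
    nlinarith [mul_le_mul_of_nonneg_left hτbound hφ1.le]
  rw [alliancePayoffDeriv, sub_nonpos, div_le_div_iff₀ (by positivity) (by positivity)]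
  nlinarith [mul_le_mul_of_nonneg_left hroot
    (by positivity : (0 : ℝ) ≤ 2 * φ2 * (X2 + β * τ) ^ 2)]

end

/-- In Case 2, no positive transfer increases the alliance payoff. -/
theorem case2_alliance_antitone_pos (φ1 φ2 X1 X2 β : ℝ)
    (hφ1 : 0 < φ1) (hφ2 : 0 < φ2) (hX1 : 0 < X1) (hX2 : 0 < X2)
    (hβ0 : 0 < β) (hβ1 : β ≤ 1)
    (hord : φ2 * X1 ≤ φ1 * X2)
    (hcase2 : 1 - Real.sqrt (φ1 * X1 * X2 / φ2) ≤ X2) :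
    AntitoneOn (fun τ : ℝ => φ2 * (1 - 1 / (2 * (X2 + β * τ))) +
        Real.sqrt (φ1 * φ2 * (X1 - τ) / (X2 + β * τ)))
      (Set.Ico 0 X1) := by
  show AntitoneOn (alliancePayoff φ1 φ2 X1 X2 β) (Ico 0 X1)
  have hbound := case2_transfer_bound hφ1 hφ2 hX1 hX2 hβ0 hβ1 hord hcase2
  have hderiv : ∀ τ ∈ Ico 0 X1,
      HasDerivAt (alliancePayoff φ1 φ2 X1 X2 β) (alliancePayoffDeriv φ1 φ2 X1 X2 β τ) τ := by
    rintro τ ⟨hτ0, hτX1⟩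
    have hY : 0 < X2 + β * τ := by positivity
    have hX1τ : 0 < X1 - τ := sub_pos.2 hτX1
    exact hasDerivAt_alliancePayoff hY.ne' (by positivity)
  exact antitoneOn_of_hasDerivWithinAt_nonpos (convex_Ico 0 X1)
    (fun τ hτ => (hderiv τ hτ).continuousAt.continuousWithinAt)
    (fun τ hτ => (hderiv τ (interior_subset hτ)).hasDerivWithinAt)
    (fun τ hτ => alliancePayoff_deriv_nonpos hφ1 hφ2 hX2 hβ0.le (interior_subset hτ) hbound)
end
end

section
/- Let φ1, φ2, X1, X2 be positive reals and β ∈ (0,1]. Define F(τ) = φ2·(1 − 1/(2·(X2 + τ))) + √( φ1·φ2·(X1 − β·τ)/(X2 + τ) ) on (−X2, X1/β). Then for every τ ∈ (−X2, 0], the derivative of F at τ is strictly negative if and only if (X1 − β·τ) + β·(X2 + τ) > √( φ2·(X1 − β·τ)/(φ1·(X2 + τ)) ), i.e., if and only if the post-transfer budgets X̄1 = X1 − β·τ and X̄2 = X2 + τ satisfy X̄1 + β·X̄2 > √(φ2·X̄1/(φ1·X̄2)). -/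
/-!
With `u = X2 + τ`, `v = X1 - βτ` and `s = √(φ1φ2 v/u)` the derivative of the alliance payoff is
`φ2/(2u²) - φ1φ2(βu + v)/(2u²s) = φ2/(2u²s) · (s - φ1(βu + v))`, so its sign is that of
`s - φ1(βu + v)`. Pulling `φ1` out of the square root, `s = φ1 √(φ2 v/(φ1 u))`, which turns
`s < φ1(βu + v)` into the stated budget inequality.
-/

open Real

lemma hasDerivAt_mul_one_sub_one_div_two_mul_add (c X τ : ℝ) (hX : X + τ ≠ 0) :
    HasDerivAt (fun τ : ℝ => c * (1 - 1 / (2 * (X + τ)))) (c / (2 * (X + τ) ^ 2)) τ := by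
  have hlin : HasDerivAt (fun τ : ℝ => 2 * (X + τ)) 2 τ := by
    simpa using ((hasDerivAt_id' τ).const_add X).const_mul 2
  have h := ((hlin.fun_inv (by positivity)).const_sub 1).const_mul c
  simp only [← one_div] at h
  exact h.congr_deriv (by field_simp)

lemma hasDerivAt_sqrt_mul_sub_div_add (c X1 X2 β τ : ℝ)
    (hq : 0 < c * (X1 - β * τ) / (X2 + τ)) :
    HasDerivAt (fun τ : ℝ => √(c * (X1 - β * τ) / (X2 + τ)))
      (-(c * (β * (X2 + τ) + (X1 - β * τ)) /
        (2 * (X2 + τ) ^ 2 * √(c * (X1 - β * τ) / (X2 + τ))))) τ := by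
  have hu : X2 + τ ≠ 0 := by rintro h; simp [h] at hq
  have hnum : HasDerivAt (fun τ : ℝ => c * (X1 - β * τ)) (c * (0 - β * 1)) τ :=
    ((hasDerivAt_const τ X1).sub ((hasDerivAt_id' τ).const_mul β)).const_mul c
  have hden : HasDerivAt (fun τ : ℝ => X2 + τ) 1 τ := (hasDerivAt_id' τ).const_add X2
  exact ((hnum.fun_div hden hu).sqrt hq.ne').congr_deriv (by field_simp; ring)

lemma sqrt_mul_div_eq_mul_sqrt_div {a : ℝ} (ha : 0 ≤ a) (b c : ℝ) :
    √(a * b / c) = a * √(b / (a * c)) := by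
  rcases ha.eq_or_lt with rfl | ha
  · simp
  rw [show a * b / c = a ^ 2 * (b / (a * c)) by field_simp, sqrt_mul (sq_nonneg a),
    sqrt_sq ha.le]

lemma div_sub_mul_mul_div_neg_iff {a k s : ℝ} (ha : 0 < a) (hk : 0 < k) (hs : 0 < s) (b w : ℝ) :
    a / k - b * a * w / (k * s) < 0 ↔ s < b * w := by
  have hfactor : a / k - b * a * w / (k * s) = a / (k * s) * (s - b * w) := by
    field_simp
  have hc : 0 < a / (k * s) := by positivity
  rw [hfactor]
  exact ⟨fun h => sub_neg.1 (neg_of_mul_neg_right h hc.le),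
    fun h => mul_neg_of_pos_of_neg hc (sub_neg.2 h)⟩

theorem case2_alliance_deriv_neg_iff_general (φ1 φ2 X1 X2 β : ℝ)
    (hφ1 : 0 < φ1) (hφ2 : 0 < φ2) (hX1 : 0 < X1)
    (hβ0 : 0 < β) :
    ∀ τ ∈ Set.Ioc (-X2) (0 : ℝ),
      (deriv (fun τ : ℝ => φ2 * (1 - 1 / (2 * (X2 + τ))) +
          Real.sqrt (φ1 * φ2 * (X1 - β * τ) / (X2 + τ))) τ < 0 ↔
        (X1 - β * τ) + β * (X2 + τ) >
          Real.sqrt (φ2 * (X1 - β * τ) / (φ1 * (X2 + τ)))) := by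
  rintro τ ⟨hτX2, hτ0⟩
  have hu : 0 < X2 + τ := by linarith
  have hv : 0 < X1 - β * τ := by nlinarith
  have hq : 0 < φ1 * φ2 * (X1 - β * τ) / (X2 + τ) := by positivity
  have hderiv := (hasDerivAt_mul_one_sub_one_div_two_mul_add φ2 X2 τ hu.ne').fun_add
    (hasDerivAt_sqrt_mul_sub_div_add (φ1 * φ2) X1 X2 β τ hq)
  rw [hderiv.deriv, ← sub_eq_add_neg,
    div_sub_mul_mul_div_neg_iff hφ2 (by positivity) (sqrt_pos.2 hq), mul_assoc φ1 φ2,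
    sqrt_mul_div_eq_mul_sqrt_div hφ1.le, mul_lt_mul_iff_right₀ hφ1, gt_iff_lt,
    add_comm (X1 - β * τ)]

/-- In Case 2 with a negative transfer, the alliance payoff has strictly
negative derivative at `τ ∈ (-X2, 0]` iff the post-transfer budgets
`X̄1 = X1 − βτ`, `X̄2 = X2 + τ` satisfy `X̄1 + βX̄2 > √(φ2X̄1/(φ1X̄2))`. -/
theorem case2_alliance_deriv_neg_iff (φ1 φ2 X1 X2 β : ℝ)
    (hφ1 : 0 < φ1) (hφ2 : 0 < φ2) (hX1 : 0 < X1) (hX2 : 0 < X2)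
    (hβ0 : 0 < β) (hβ1 : β ≤ 1) :
    ∀ τ ∈ Set.Ioc (-X2) (0 : ℝ),
      (deriv (fun τ : ℝ => φ2 * (1 - 1 / (2 * (X2 + τ))) +
          Real.sqrt (φ1 * φ2 * (X1 - β * τ) / (X2 + τ))) τ < 0 ↔
        (X1 - β * τ) + β * (X2 + τ) >
          Real.sqrt (φ2 * (X1 - β * τ) / (φ1 * (X2 + τ)))) :=
  case2_alliance_deriv_neg_iff_general φ1 φ2 X1 X2 β hφ1 hφ2 hX1 hβ0
end

section
/- Let φ1, φ2, X1, X2 be positive reals and β ∈ (0,1], and suppose φ2·X1 ≤ φ1·X2 and 1 − √(φ1·X1·X2/φ2) > X2 (Case 3 condition). Then the function K(τ) = (1/2)·φ1·(X1 − τ) + (1/2)·φ2·(X2 + β·τ) + √( φ1·φ2·(X1 − τ)·(X2 + β·τ) ) is nonincreasing on [0, X1). (In Case 3, no positive transfer increases the alliance payoff.) -/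
noncomputable section

/-- In Case 3, no positive transfer increases the alliance payoff. -/
theorem case3_alliance_antitone_pos (φ1 φ2 X1 X2 β : ℝ)
    (hφ1 : 0 < φ1) (hφ2 : 0 < φ2) (hX1 : 0 < X1) (hX2 : 0 < X2)
    (hβ0 : 0 < β) (hβ1 : β ≤ 1)
    (hord : φ2 * X1 ≤ φ1 * X2)
    (hcase3 : X2 < 1 - Real.sqrt (φ1 * X1 * X2 / φ2)) :
    AntitoneOn (fun τ : ℝ => (1 / 2) * φ1 * (X1 - τ) +
        (1 / 2) * φ2 * (X2 + β * τ) +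
        Real.sqrt (φ1 * φ2 * (X1 - τ) * (X2 + β * τ)))
      (Set.Ico 0 X1) := by
  -- key pointwise inequality
  have key : ∀ u : ℝ, 0 ≤ u → u < X1 →
      β * φ2 * Real.sqrt (φ1 * (X1 - u)) ≤ φ1 * Real.sqrt (φ2 * (X2 + β * u)) := by
    intro u hu0 hu1
    have hβu : 0 ≤ β * u := mul_nonneg hβ0.le hu0
    have ha : (0:ℝ) ≤ φ1 * (X1 - u) := mul_nonneg hφ1.le (by linarith)
    have hb : (0:ℝ) < φ2 * (X2 + β * u) := mul_pos hφ2 (by linarith)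
    have hpa := Real.sq_sqrt ha
    have hpb := Real.sq_sqrt hb.le
    have hp0 := Real.sqrt_nonneg (φ1 * (X1 - u))
    have hq0 := Real.sqrt_nonneg (φ2 * (X2 + β * u))
    have h0 : β ^ 2 * φ2 * (X1 - u) ≤ φ1 * (X2 + β * u) := by
      nlinarith [mul_nonneg (mul_nonneg (sq_nonneg β) hφ2.le) hu0,
        mul_nonneg hφ1.le hβu, sq_nonneg β,
        mul_nonneg (mul_nonneg (by nlinarith : (0:ℝ) ≤ 1 - β ^ 2) hφ2.le) hX1.le]
    have hsq : (β * φ2 * Real.sqrt (φ1 * (X1 - u))) ^ 2 ≤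
        (φ1 * Real.sqrt (φ2 * (X2 + β * u))) ^ 2 := by
      have e1 : (β * φ2 * Real.sqrt (φ1 * (X1 - u))) ^ 2 =
          (φ1 * φ2) * (β ^ 2 * φ2 * (X1 - u)) := by
        rw [mul_pow, mul_pow, hpa]; ring
      have e2 : (φ1 * Real.sqrt (φ2 * (X2 + β * u))) ^ 2 =
          (φ1 * φ2) * (φ1 * (X2 + β * u)) := by
        rw [mul_pow, hpb]; ring
      rw [e1, e2]
      exact mul_le_mul_of_nonneg_left h0 (mul_pos hφ1 hφ2).le
    have hx0 : 0 ≤ β * φ2 * Real.sqrt (φ1 * (X1 - u)) :=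
      mul_nonneg (mul_nonneg hβ0.le hφ2.le) hp0
    have hy0 : 0 ≤ φ1 * Real.sqrt (φ2 * (X2 + β * u)) := mul_nonneg hφ1.le hq0
    nlinarith [hsq, hx0, hy0, sq_nonneg (β * φ2 * Real.sqrt (φ1 * (X1 - u)) +
      φ1 * Real.sqrt (φ2 * (X2 + β * u)))]
  intro s hs t ht hst
  simp only [Set.mem_Ico] at hs ht
  obtain ⟨hs0, hs1⟩ := hs
  obtain ⟨ht0, ht1⟩ := ht
  have hβs : 0 ≤ β * s := mul_nonneg hβ0.le hs0
  have hβt : 0 ≤ β * t := mul_nonneg hβ0.le ht0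
  have has : (0:ℝ) ≤ φ1 * (X1 - s) := mul_nonneg hφ1.le (by linarith)
  have hat : (0:ℝ) ≤ φ1 * (X1 - t) := mul_nonneg hφ1.le (by linarith)
  have hbs : (0:ℝ) < φ2 * (X2 + β * s) := mul_pos hφ2 (by linarith)
  have hbt : (0:ℝ) < φ2 * (X2 + β * t) := mul_pos hφ2 (by linarith)
  set A := Real.sqrt (φ1 * (X1 - s)) with hA
  set A' := Real.sqrt (φ1 * (X1 - t)) with hA'
  set B := Real.sqrt (φ2 * (X2 + β * s)) with hB
  set B' := Real.sqrt (φ2 * (X2 + β * t)) with hB'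
  have hA2 : A ^ 2 = φ1 * (X1 - s) := Real.sq_sqrt has
  have hA'2 : A' ^ 2 = φ1 * (X1 - t) := Real.sq_sqrt hat
  have hB2 : B ^ 2 = φ2 * (X2 + β * s) := Real.sq_sqrt hbs.le
  have hB'2 : B' ^ 2 = φ2 * (X2 + β * t) := Real.sq_sqrt hbt.le
  have hA0 : 0 ≤ A := Real.sqrt_nonneg _
  have hA'0 : 0 ≤ A' := Real.sqrt_nonneg _
  have hB0 : 0 ≤ B := Real.sqrt_nonneg _
  have hB'0 : 0 ≤ B' := Real.sqrt_nonneg _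
  have hBpos : 0 < B := Real.sqrt_pos.mpr hbs
  have hAA : A' ≤ A := Real.sqrt_le_sqrt (by nlinarith)
  have hk1 : β * φ2 * A ≤ φ1 * B := key s hs0 hs1
  have hk2 : β * φ2 * A' ≤ φ1 * B' := key t ht0 ht1
  -- sum of roots is nonincreasing
  have hsum : A' + B' ≤ A + B := by
    have e3 : (A - A') * (A + A') = φ1 * (t - s) := by
      linear_combination hA2 - hA'2
    have e4 : (B' - B) * (B' + B) = β * φ2 * (t - s) := by
      linear_combination hB'2 - hB2
    have e5 : φ1 * ((B' - B) * (B' + B)) = (A - A') * (β * φ2 * (A + A')) := by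
      linear_combination φ1 * e4 - (β * φ2) * e3
    have h1 : (A - A') * (β * φ2 * (A + A')) ≤ (A - A') * (φ1 * (B + B')) :=
      mul_le_mul_of_nonneg_left (by linarith) (sub_nonneg.mpr hAA)
    have h6 : φ1 * ((B' - B) * (B' + B)) ≤ (A - A') * (φ1 * (B + B')) := by
      rw [e5]; exact h1
    have h7 : (φ1 * (B + B')) * (B' - B) ≤ (φ1 * (B + B')) * (A - A') := by
      calc (φ1 * (B + B')) * (B' - B) = φ1 * ((B' - B) * (B' + B)) := by ring
        _ ≤ (A - A') * (φ1 * (B + B')) := h6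
        _ = (φ1 * (B + B')) * (A - A') := by ring
    have h8 := le_of_mul_le_mul_left h7
      (mul_pos hφ1 (show (0:ℝ) < B + B' by linarith))
    linarith
  -- rewrite the sqrt of the product
  have hrs : Real.sqrt (φ1 * φ2 * (X1 - s) * (X2 + β * s)) = A * B := by
    rw [hA, hB, ← Real.sqrt_mul has]
    congr 1
    ring
  have hrt : Real.sqrt (φ1 * φ2 * (X1 - t) * (X2 + β * t)) = A' * B' := by
    rw [hA', hB', ← Real.sqrt_mul hat]
    congr 1
    ring
  have h := mul_self_le_mul_self (show (0:ℝ) ≤ A' + B' by linarith) hsum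
  have e6 : (A' + B') * (A' + B') = φ1 * (X1 - t) + φ2 * (X2 + β * t) + 2 * (A' * B') := by
    linear_combination hA'2 + hB'2
  have e7 : (A + B) * (A + B) = φ1 * (X1 - s) + φ2 * (X2 + β * s) + 2 * (A * B) := by
    linear_combination hA2 + hB2
  rw [e6, e7] at h
  simp only [hrs, hrt]
  linarith
end
end
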